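/- arXiv:2409.04287 — 5 statements merged into one kernel-verified Lean document; each statement's English description precedes it below -/
import Mathlib

section
/- Let Γ₁(r,a) = (1 + a r^{2(σ₂-σ₁)})^{-1} and Γ₂(r,a,b) = (1 - 4b r^{2(σ-2σ₁)} Γ₁(r,a)²)^{1/2}. Then for all j, m ∈ ℕ, |∂^{j+m}/(∂aʲ ∂bᵐ) Γ₂(r,a,b)| ≤ C r^{2j(σ₂-σ₁)+2m(σ-2σ₁)} for all (r,a,b) ∈ (0,ε*] × [0,1] × [0,1], and there exists a constant C_{j,m} with ∂^{j+m}/(∂aʲ ∂bᵐ) Γ₂(r,0,0) = C_{j,m} r^{2j(σ₂-σ₁)+2m(σ-2σ₁)}. -/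
open Real Set

noncomputable def Gamma1 (σ₁ σ₂ r a : ℝ) : ℝ := (1 + a * r ^ (2*(σ₂-σ₁)))⁻¹

noncomputable def Gamma2 (σ σ₁ σ₂ r a b : ℝ) : ℝ :=
  Real.sqrt (1 - 4*b*r ^ (2*(σ-2*σ₁)) * (Gamma1 σ₁ σ₂ r a)^2)

/-- Mixed partial derivative `∂^{j+m}/(∂aʲ ∂bᵐ)`. -/
noncomputable def pderiv2 (j m : ℕ) (f : ℝ → ℝ → ℝ) (a b : ℝ) : ℝ :=
  iteratedDeriv m (fun b' => iteratedDeriv j (fun a' => f a' b') a) b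

noncomputable def lam1 (σ σ₁ σ₂ r a b : ℝ) : ℝ :=
  -2 * r ^ (2*(σ-σ₁)) * Gamma1 σ₁ σ₂ r a * (1 + Gamma2 σ σ₁ σ₂ r a b)⁻¹

noncomputable def lam2 (σ σ₁ σ₂ r a b : ℝ) : ℝ :=
  -(r ^ (2*σ₁) / 2) * (1 + a * r ^ (2*(σ₂-σ₁))) * (1 + Gamma2 σ σ₁ σ₂ r a b)

noncomputable def Gfun (σ σ₁ σ₂ r a b : ℝ) : ℝ :=
  r ^ (2*σ₁) * (1 + a * r ^ (2*(σ₂-σ₁))) * Gamma2 σ σ₁ σ₂ r a b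


open Filter

section Helpers

noncomputable def Pd1 (f : ℝ×ℝ → ℝ) (p : ℝ×ℝ) : ℝ := fderiv ℝ f p (1,0)
noncomputable def Pd2 (f : ℝ×ℝ → ℝ) (p : ℝ×ℝ) : ℝ := fderiv ℝ f p (0,1)

lemma pd1_smooth {f : ℝ×ℝ → ℝ} {Ω : Set (ℝ×ℝ)} (hΩ : IsOpen Ω)
    (hf : ContDiffOn ℝ (⊤ : ℕ∞) f Ω) : ContDiffOn ℝ (⊤ : ℕ∞) (Pd1 f) Ω :=
  (hf.fderiv_of_isOpen hΩ (by simp)).clm_apply contDiffOn_const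

lemma deriv_slice1 {f : ℝ×ℝ → ℝ} {Ω : Set (ℝ×ℝ)} (hΩ : IsOpen Ω)
    (hf : ContDiffOn ℝ (⊤ : ℕ∞) f Ω) {p : ℝ×ℝ} (hp : p ∈ Ω) :
    deriv (fun u => f (u, p.2)) p.1 = Pd1 f p := by
  have hdf : HasFDerivAt f (fderiv ℝ f p) p :=
    ((hf.contDiffAt (hΩ.mem_nhds hp)).differentiableAt (by simp)).hasFDerivAt
  have hι : HasDerivAt (fun u : ℝ => (u, p.2)) ((1:ℝ), (0:ℝ)) p.1 :=
    HasDerivAt.prodMk (hasDerivAt_id p.1) (hasDerivAt_const _ _)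
  have := hdf.comp_hasDerivAt p.1 (by simpa using hι)
  simpa [Pd1, Function.comp_def] using this.deriv

lemma pd2_smooth {f : ℝ×ℝ → ℝ} {Ω : Set (ℝ×ℝ)} (hΩ : IsOpen Ω)
    (hf : ContDiffOn ℝ (⊤ : ℕ∞) f Ω) : ContDiffOn ℝ (⊤ : ℕ∞) (Pd2 f) Ω :=
  (hf.fderiv_of_isOpen hΩ (by simp)).clm_apply contDiffOn_const

lemma deriv_slice2 {f : ℝ×ℝ → ℝ} {Ω : Set (ℝ×ℝ)} (hΩ : IsOpen Ω)
    (hf : ContDiffOn ℝ (⊤ : ℕ∞) f Ω) {p : ℝ×ℝ} (hp : p ∈ Ω) :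
    deriv (fun v => f (p.1, v)) p.2 = Pd2 f p := by
  have hdf : HasFDerivAt f (fderiv ℝ f p) p :=
    ((hf.contDiffAt (hΩ.mem_nhds hp)).differentiableAt (by simp)).hasFDerivAt
  have hι : HasDerivAt (fun v : ℝ => (p.1, v)) ((0:ℝ), (1:ℝ)) p.2 :=
    HasDerivAt.prodMk (hasDerivAt_const _ _) (hasDerivAt_id p.2)
  have := hdf.comp_hasDerivAt p.2 (by simpa using hι)
  simpa [Pd2, Function.comp_def] using this.deriv

lemma iter1 {f : ℝ×ℝ → ℝ} {Ω : Set (ℝ×ℝ)} (hΩ : IsOpen Ω)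
    (hf : ContDiffOn ℝ (⊤ : ℕ∞) f Ω) (j : ℕ) :
    ContDiffOn ℝ (⊤ : ℕ∞) (Pd1^[j] f) Ω ∧
      ∀ p ∈ Ω, iteratedDeriv j (fun u => f (u, p.2)) p.1 = Pd1^[j] f p := by
  induction j with
  | zero => exact ⟨hf, fun p _ => by simp⟩
  | succ j ih =>
    refine ⟨by rw [Function.iterate_succ_apply']; exact pd1_smooth hΩ ih.1, fun p hp => ?_⟩
    rw [iteratedDeriv_succ, Function.iterate_succ_apply']
    have hnhds : {u : ℝ | (u, p.2) ∈ Ω} ∈ nhds p.1 :=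
      (hΩ.preimage (Continuous.prodMk_left p.2)).mem_nhds hp
    have hev : (fun u => iteratedDeriv j (fun u' => f (u', p.2)) u)
        =ᶠ[nhds p.1] fun u => Pd1^[j] f (u, p.2) := by
      filter_upwards [hnhds] with u hu
      exact ih.2 (u, p.2) hu
    rw [hev.deriv_eq]
    exact deriv_slice1 hΩ ih.1 hp

lemma iter2 {f : ℝ×ℝ → ℝ} {Ω : Set (ℝ×ℝ)} (hΩ : IsOpen Ω)
    (hf : ContDiffOn ℝ (⊤ : ℕ∞) f Ω) (m : ℕ) :
    ContDiffOn ℝ (⊤ : ℕ∞) (Pd2^[m] f) Ω ∧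
      ∀ p ∈ Ω, iteratedDeriv m (fun v => f (p.1, v)) p.2 = Pd2^[m] f p := by
  induction m with
  | zero => exact ⟨hf, fun p _ => by simp⟩
  | succ m ih =>
    refine ⟨by rw [Function.iterate_succ_apply']; exact pd2_smooth hΩ ih.1, fun p hp => ?_⟩
    rw [iteratedDeriv_succ, Function.iterate_succ_apply']
    have hnhds : {v : ℝ | (p.1, v) ∈ Ω} ∈ nhds p.2 :=
      (hΩ.preimage (Continuous.prodMk_right p.1)).mem_nhds hp
    have hev : (fun v => iteratedDeriv m (fun v' => f (p.1, v')) v)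
        =ᶠ[nhds p.2] fun v => Pd2^[m] f (p.1, v) := by
      filter_upwards [hnhds] with v hv
      exact ih.2 (p.1, v) hv
    rw [hev.deriv_eq]
    exact deriv_slice2 hΩ ih.1 hp

lemma evq_iteratedDeriv {f g : ℝ → ℝ} {x : ℝ} (h : f =ᶠ[nhds x] g) (n : ℕ) :
    iteratedDeriv n f =ᶠ[nhds x] iteratedDeriv n g := by
  induction n with
  | zero => simpa using h
  | succ n ih => simpa [iteratedDeriv_succ] using ih.deriv

lemma deriv_comp_mul_right (c : ℝ) (g : ℝ → ℝ) (x : ℝ) :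
    deriv (fun y => g (y * c)) x = c * deriv g (x * c) := by
  rcases eq_or_ne c 0 with rfl | hc
  · simp
  · by_cases hg : DifferentiableAt ℝ g (x * c)
    · have h1 : HasDerivAt (fun y : ℝ => y * c) c x := by
        simpa using (hasDerivAt_id x).mul_const c
      have := (hg.hasDerivAt.comp x h1)
      rw [show (fun y => g (y * c)) = g ∘ fun y => y * c from rfl, this.deriv, mul_comm]
    · have h1 : ¬ DifferentiableAt ℝ (fun y => g (y * c)) x := by
        intro h
        apply hg
        have hx : (x * c) * c⁻¹ = x := by field_simp
        have h2 : DifferentiableAt ℝ ((fun y => g (y * c)) ∘ (fun z : ℝ => z * c⁻¹)) (x * c) :=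
          DifferentiableAt.comp (x * c) (by rwa [hx]) (differentiableAt_id.mul_const c⁻¹)
        have h3 : ((fun y => g (y * c)) ∘ (fun z : ℝ => z * c⁻¹)) = g := by
          funext z
          simp [Function.comp, mul_assoc, inv_mul_cancel₀ hc]
        rwa [h3] at h2
      rw [deriv_zero_of_not_differentiableAt h1, deriv_zero_of_not_differentiableAt hg, mul_zero]

lemma iterD_const_mul (g : ℝ → ℝ) (k : ℝ) (n : ℕ) (x : ℝ) :
    iteratedDeriv n (fun y => k * g y) x = k * iteratedDeriv n g x := by
  induction n generalizing x with
  | zero => simp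
  | succ n ih =>
    have h : iteratedDeriv n (fun y => k * g y) = fun y => k * iteratedDeriv n g y :=
      funext fun y => ih y
    rw [iteratedDeriv_succ, iteratedDeriv_succ, h, deriv_const_mul_field]

lemma iterD_comp_mul (g : ℝ → ℝ) (c : ℝ) (n : ℕ) (x : ℝ) :
    iteratedDeriv n (fun y => g (y * c)) x = c ^ n * iteratedDeriv n g (x * c) := by
  induction n generalizing g x with
  | zero => simp
  | succ n ih =>
    rw [iteratedDeriv_succ', iteratedDeriv_succ']
    have h : (deriv fun y => g (y * c)) = fun y => c * deriv g (y * c) :=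
      funext fun y => deriv_comp_mul_right c g y
    rw [h, iterD_const_mul _ c n x, ih (deriv g) x]
    ring

noncomputable def Ffun (p : ℝ×ℝ) : ℝ := Real.sqrt (1 - 4 * p.2 * ((1 + p.1)⁻¹)^2)

def Om : Set (ℝ×ℝ) := {p | 0 < 1 + p.1 ∧ 0 < 1 - 4 * p.2 * ((1 + p.1)⁻¹)^2}

lemma isOpen_Om : IsOpen Om := by
  have hU : IsOpen {p : ℝ×ℝ | 0 < 1 + p.1} :=
    isOpen_lt continuous_const (continuous_const.add continuous_fst)
  have hcont : ContinuousOn (fun p : ℝ×ℝ => 1 - 4 * p.2 * ((1 + p.1)⁻¹)^2)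
      {p : ℝ×ℝ | 0 < 1 + p.1} := by
    have h1 : ContinuousOn (fun p : ℝ×ℝ => (1 + p.1)⁻¹) {p : ℝ×ℝ | 0 < 1 + p.1} :=
      ContinuousOn.inv₀ (continuous_const.add continuous_fst).continuousOn
        (fun p hp => ne_of_gt hp)
    exact continuousOn_const.sub ((continuousOn_const.mul continuous_snd.continuousOn).mul
      (h1.pow 2))
  have : Om = {p : ℝ×ℝ | 0 < 1 + p.1} ∩
      ((fun p : ℝ×ℝ => 1 - 4 * p.2 * ((1 + p.1)⁻¹)^2) ⁻¹' Set.Ioi 0) := by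
    ext p; simp [Om, Set.mem_setOf_eq, and_comm]
  rw [this]
  exact hcont.isOpen_inter_preimage hU isOpen_Ioi

lemma contDiffOn_Ffun : ContDiffOn ℝ (⊤ : ℕ∞) Ffun Om := by
  intro p hp
  have ha : ContDiffAt ℝ (⊤ : ℕ∞) (fun q : ℝ×ℝ => 1 + q.1) p :=
    contDiffAt_const.add contDiffAt_fst
  have hb : ContDiffAt ℝ (⊤ : ℕ∞) (fun q : ℝ×ℝ => (1 + q.1)⁻¹) p := ha.inv (ne_of_gt hp.1)
  have h1 : ContDiffAt ℝ (⊤ : ℕ∞) (fun q : ℝ×ℝ => 1 - 4 * q.2 * ((1 + q.1)⁻¹)^2) p :=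
    contDiffAt_const.sub ((contDiffAt_const.mul contDiffAt_snd).mul (hb.pow 2))
  exact ((Real.contDiffAt_sqrt (ne_of_gt hp.2)).comp p h1).contDiffWithinAt

lemma mixed_eq (j m : ℕ) (u v : ℝ) (h : (u, v) ∈ Om) :
    iteratedDeriv m (fun v' => iteratedDeriv j (fun u' => Ffun (u', v')) u) v
      = Pd2^[m] (Pd1^[j] Ffun) (u, v) := by
  obtain ⟨h1sm, h1eq⟩ := iter1 isOpen_Om contDiffOn_Ffun j
  obtain ⟨h2sm, h2eq⟩ := iter2 isOpen_Om h1sm m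
  have hnhds : {v' : ℝ | (u, v') ∈ Om} ∈ nhds v :=
    (isOpen_Om.preimage (Continuous.prodMk_right u)).mem_nhds h
  have hev : (fun v' => iteratedDeriv j (fun u' => Ffun (u', v')) u)
      =ᶠ[nhds v] fun v' => Pd1^[j] Ffun (u, v') := by
    filter_upwards [hnhds] with v' hv'
    exact h1eq (u, v') hv'
  rw [(evq_iteratedDeriv hev m).self_of_nhds]
  exact h2eq (u, v) h

lemma contOn_Q (j m : ℕ) : ContinuousOn (Pd2^[m] (Pd1^[j] Ffun)) Om :=
  ((iter2 isOpen_Om (iter1 isOpen_Om contDiffOn_Ffun j).1 m).1).continuousOn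

lemma key (c₁ c₂ a b : ℝ) (j m : ℕ) (hmem : (a * c₁, b * c₂) ∈ Om) :
    iteratedDeriv m (fun b' => iteratedDeriv j (fun a' => Ffun (a' * c₁, b' * c₂)) a) b
      = c₁ ^ j * c₂ ^ m * Pd2^[m] (Pd1^[j] Ffun) (a * c₁, b * c₂) := by
  have h1 : (fun b' => iteratedDeriv j (fun a' => Ffun (a' * c₁, b' * c₂)) a)
      = fun b' => c₁ ^ j * iteratedDeriv j (fun u => Ffun (u, b' * c₂)) (a * c₁) :=
    funext fun b' => iterD_comp_mul (fun u => Ffun (u, b' * c₂)) c₁ j a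
  rw [h1, iterD_const_mul (fun b' => iteratedDeriv j (fun u => Ffun (u, b' * c₂)) (a * c₁))
    (c₁ ^ j) m b,
    iterD_comp_mul (fun v => iteratedDeriv j (fun u => Ffun (u, v)) (a * c₁)) c₂ m b,
    mixed_eq j m (a * c₁) (b * c₂) hmem]
  ring


end Helpers

theorem stmt1 (σ σ₁ σ₂ εs : ℝ) (hσ : 1 ≤ σ) (hσ₁ : 0 ≤ σ₁) (h12 : σ₁ < σ / 2)
    (h22 : σ / 2 < σ₂) (h2σ : σ₂ ≤ σ) (hε : 0 < εs)
    (hpos : ∀ r ∈ Set.Ioc (0:ℝ) εs, ∀ a ∈ Set.Icc (0:ℝ) 1, ∀ b ∈ Set.Icc (0:ℝ) 1,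
      0 < 1 - 4*b*r ^ (2*(σ-2*σ₁)) * (Gamma1 σ₁ σ₂ r a)^2)
    (j m : ℕ) :
    (∃ C > 0, ∀ r ∈ Set.Ioc (0:ℝ) εs, ∀ a ∈ Set.Icc (0:ℝ) 1, ∀ b ∈ Set.Icc (0:ℝ) 1,
      |pderiv2 j m (fun a' b' => Gamma2 σ σ₁ σ₂ r a' b') a b|
        ≤ C * r ^ (2*(j:ℝ)*(σ₂-σ₁) + 2*(m:ℝ)*(σ-2*σ₁))) ∧
    (∃ Cjm : ℝ, ∀ r ∈ Set.Ioc (0:ℝ) εs,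
      pderiv2 j m (fun a' b' => Gamma2 σ σ₁ σ₂ r a' b') 0 0
        = Cjm * r ^ (2*(j:ℝ)*(σ₂-σ₁) + 2*(m:ℝ)*(σ-2*σ₁))) := by
  set β : ℝ := 2*(σ₂-σ₁) with hβdef
  set α : ℝ := 2*(σ-2*σ₁) with hαdef
  have hβ : 0 < β := by simp only [hβdef]; linarith
  have hα : 0 < α := by simp only [hαdef]; linarith
  -- smallness of εs^α
  have hE : 4 * εs ^ α < 1 := by
    have := hpos εs ⟨hε, le_refl εs⟩ 0 ⟨le_refl 0, zero_le_one⟩ 1 ⟨zero_le_one, le_refl 1⟩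
    simp [Gamma1] at this
    linarith
  have hεβ : 0 < εs ^ β := Real.rpow_pos_of_pos hε β
  have hεα : 0 < εs ^ α := Real.rpow_pos_of_pos hε α
  -- compact set and its inclusion in Om
  set K : Set (ℝ×ℝ) := Set.Icc (0:ℝ) (εs ^ β) ×ˢ Set.Icc (0:ℝ) (εs ^ α) with hKdef
  have hKOm : K ⊆ Om := by
    rintro ⟨u, v⟩ ⟨⟨hu0, hu1⟩, ⟨hv0, hv1⟩⟩
    have h1u : (0:ℝ) < 1 + u := by linarith
    have hinv : (1 + u)⁻¹ ≤ 1 := by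
      rw [inv_le_one_iff₀]; right; linarith
    have hinv0 : 0 ≤ (1 + u)⁻¹ := le_of_lt (inv_pos.mpr h1u)
    refine ⟨h1u, ?_⟩
    have hsq : ((1 + u)⁻¹)^2 ≤ 1 := pow_le_one₀ hinv0 hinv
    have h4v : (0:ℝ) ≤ 4 * v := by linarith
    have := mul_le_mul_of_nonneg_left hsq h4v
    nlinarith
  have hKcp : IsCompact K := isCompact_Icc.prod isCompact_Icc
  obtain ⟨C, hC⟩ := hKcp.exists_bound_of_continuousOn ((contOn_Q j m).mono hKOm)
  -- rewrite Gamma2 as Ffun of scaled coordinates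
  have hG : ∀ r > (0:ℝ), ∀ a' b' : ℝ, Gamma2 σ σ₁ σ₂ r a' b'
      = Ffun (a' * r ^ β, b' * r ^ α) := by
    intro r _hr a' b'
    simp only [Gamma2, Gamma1, Ffun]
    congr 1
    ring
  -- membership of scaled points
  have hmemK : ∀ r ∈ Set.Ioc (0:ℝ) εs, ∀ a ∈ Set.Icc (0:ℝ) 1, ∀ b ∈ Set.Icc (0:ℝ) 1,
      (a * r ^ β, b * r ^ α) ∈ K := by
    rintro r ⟨hr0, hr1⟩ a ⟨ha0, ha1⟩ b ⟨hb0, hb1⟩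
    have hrβ : 0 < r ^ β := Real.rpow_pos_of_pos hr0 β
    have hrα : 0 < r ^ α := Real.rpow_pos_of_pos hr0 α
    have h1 : r ^ β ≤ εs ^ β := Real.rpow_le_rpow (le_of_lt hr0) hr1 (le_of_lt hβ)
    have h2 : r ^ α ≤ εs ^ α := Real.rpow_le_rpow (le_of_lt hr0) hr1 (le_of_lt hα)
    constructor
    · constructor
      · positivity
      · calc a * r ^ β ≤ 1 * r ^ β := by nlinarith
          _ ≤ εs ^ β := by linarith
    · constructor
      · positivity
      · calc b * r ^ α ≤ 1 * r ^ α := by nlinarith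
          _ ≤ εs ^ α := by linarith
  -- exponent arithmetic
  have hexp : ∀ r > (0:ℝ), (r ^ β) ^ j * (r ^ α) ^ m
      = r ^ (2*(j:ℝ)*(σ₂-σ₁) + 2*(m:ℝ)*(σ-2*σ₁)) := by
    intro r hr
    rw [← Real.rpow_natCast (r ^ β) j, ← Real.rpow_natCast (r ^ α) m,
      ← Real.rpow_mul (le_of_lt hr), ← Real.rpow_mul (le_of_lt hr),
      ← Real.rpow_add hr]
    congr 1
    simp only [hβdef, hαdef]
    ring
  -- the key formula for pderiv2
  have hform : ∀ r ∈ Set.Ioc (0:ℝ) εs, ∀ a ∈ Set.Icc (0:ℝ) 1, ∀ b ∈ Set.Icc (0:ℝ) 1,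
      pderiv2 j m (fun a' b' => Gamma2 σ σ₁ σ₂ r a' b') a b
        = r ^ (2*(j:ℝ)*(σ₂-σ₁) + 2*(m:ℝ)*(σ-2*σ₁))
            * Pd2^[m] (Pd1^[j] Ffun) (a * r ^ β, b * r ^ α) := by
    intro r hr a ha b hb
    have hmem : (a * r ^ β, b * r ^ α) ∈ Om := hKOm (hmemK r hr a ha b hb)
    rw [pderiv2]
    simp only [hG r hr.1]
    rw [key (r ^ β) (r ^ α) a b j m hmem, hexp r hr.1]
  constructor
  · refine ⟨max C 1, lt_of_lt_of_le one_pos (le_max_right C 1), ?_⟩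
    intro r hr a ha b hb
    rw [hform r hr a ha b hb]
    have hrE : 0 < r ^ (2*(j:ℝ)*(σ₂-σ₁) + 2*(m:ℝ)*(σ-2*σ₁)) :=
      Real.rpow_pos_of_pos hr.1 _
    have hQ : |Pd2^[m] (Pd1^[j] Ffun) (a * r ^ β, b * r ^ α)| ≤ max C 1 := by
      have := hC _ (hmemK r hr a ha b hb)
      rw [Real.norm_eq_abs] at this
      exact le_trans this (le_max_left C 1)
    rw [abs_mul, abs_of_pos hrE]
    calc r ^ (2*(j:ℝ)*(σ₂-σ₁) + 2*(m:ℝ)*(σ-2*σ₁))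
          * |Pd2^[m] (Pd1^[j] Ffun) (a * r ^ β, b * r ^ α)|
        ≤ r ^ (2*(j:ℝ)*(σ₂-σ₁) + 2*(m:ℝ)*(σ-2*σ₁)) * max C 1 := by
          exact mul_le_mul_of_nonneg_left hQ (le_of_lt hrE)
      _ = max C 1 * r ^ (2*(j:ℝ)*(σ₂-σ₁) + 2*(m:ℝ)*(σ-2*σ₁)) := mul_comm _ _
  · refine ⟨Pd2^[m] (Pd1^[j] Ffun) (0, 0), ?_⟩
    intro r hr
    have := hform r hr 0 ⟨le_refl 0, zero_le_one⟩ 0 ⟨le_refl 0, zero_le_one⟩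
    rw [zero_mul, zero_mul] at this
    rw [this, mul_comm]
end

section
/- Define λ₁⁰(r,a,b) = -2 r^{2(σ-σ₁)} Γ₁(r,a) (1 + Γ₂(r,a,b))^{-1}. Then for all j, m ∈ ℕ, |∂^{j+m}/(∂aʲ ∂bᵐ) λ₁⁰(r,a,b)| ≤ C r^{2(σ-σ₁)+2j(σ₂-σ₁)+2m(σ-2σ₁)} uniformly on (r,a,b) ∈ (0,ε*] × [0,1] × [0,1], and at (a,b)=(0,0) the derivative equals C_{1,j,m} r^{2(σ-σ₁)+2j(σ₂-σ₁)+2m(σ-2σ₁)} for some constant C_{1,j,m}. -/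
/-! With `F x y = (1 + x)⁻¹ * (1 + √(1 - 4 y (1 + x)⁻²))⁻¹`, which does not depend on `r`,
`λ₁⁰(r, a, b) = -2 r^{2(σ-σ₁)} F(r^{2(σ₂-σ₁)} a, r^{2(σ-2σ₁)} b)`. Each derivative in `a`
(resp. `b`) therefore produces a factor `r^{2(σ₂-σ₁)}` (resp. `r^{2(σ-2σ₁)}`), times the
corresponding partial derivative of `F` at the rescaled point. For `r ≤ ε*` these points stay in
the compact rectangle `[0, ε*^{2(σ₂-σ₁)}] × [0, ε*^{2(σ-2σ₁)}]`, on a neighbourhood of which `F` is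
smooth, so the partial derivatives of `F` are bounded there; at `(a, b) = (0, 0)` the rescaled
point is `(0, 0)` for every `r`. -/

open Real Set

open scoped ContDiff

section Partial

variable {𝕜 E : Type*} [NontriviallyNormedField 𝕜] [NormedAddCommGroup E] [NormedSpace 𝕜 E]

-- No differentiability is needed, since `deriv_comp_mul_left` holds for arbitrary `f`.
theorem iteratedDeriv_comp_mul_left (n : ℕ) (c : 𝕜) (f : 𝕜 → E) (x : 𝕜) :
    iteratedDeriv n (fun x => f (c * x)) x = c ^ n • iteratedDeriv n f (c * x) := by
  induction n generalizing f with
  | zero => simp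
  | succ n ih =>
    have hd : deriv (fun x => f (c * x)) = fun x => c • deriv f (c * x) :=
      funext (deriv_comp_mul_left c f)
    rw [iteratedDeriv_succ', iteratedDeriv_succ', hd, iteratedDeriv_fun_const_smul_field, ih,
      smul_smul, pow_succ']

-- Defined through the one-variable `deriv`, so that iterated partials are `iteratedDeriv`s for
-- every `f`; the link with `fderiv` is only needed for smoothness.
noncomputable def partialFst (f : 𝕜 × 𝕜 → E) (q : 𝕜 × 𝕜) : E := deriv (fun x => f (x, q.2)) q.1

noncomputable def partialSnd (f : 𝕜 × 𝕜 → E) (q : 𝕜 × 𝕜) : E := deriv (fun y => f (q.1, y)) q.2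

theorem iteratedDeriv_eq_iterate_partialFst (n : ℕ) (f : 𝕜 × 𝕜 → E) (x y : 𝕜) :
    iteratedDeriv n (fun x' => f (x', y)) x = (partialFst^[n] f) (x, y) := by
  induction n generalizing f with
  | zero => simp
  | succ n ih => rw [iteratedDeriv_succ', Function.iterate_succ_apply, ← ih]; rfl

theorem iteratedDeriv_eq_iterate_partialSnd (n : ℕ) (f : 𝕜 × 𝕜 → E) (x y : 𝕜) :
    iteratedDeriv n (fun y' => f (x, y')) y = (partialSnd^[n] f) (x, y) := by
  induction n generalizing f with
  | zero => simp
  | succ n ih => rw [iteratedDeriv_succ', Function.iterate_succ_apply, ← ih]; rfl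

variable {f : 𝕜 × 𝕜 → E} {U : Set (𝕜 × 𝕜)} {n k : WithTop ℕ∞}

theorem ContDiffOn.partialFst_of_isOpen (hf : ContDiffOn 𝕜 n f U) (hU : IsOpen U)
    (hkn : k + 1 ≤ n) : ContDiffOn 𝕜 k (partialFst f) U := by
  refine ((hf.fderiv_of_isOpen hU hkn).clm_apply (contDiffOn_const (c := ((1, 0) : 𝕜 × 𝕜)))).congr
    fun q hq => ?_
  have hn : n ≠ 0 := by rintro rfl; simp at hkn
  have hfq : HasFDerivAt f (fderiv 𝕜 f q) q :=
    ((hf.differentiableOn hn).differentiableAt (hU.mem_nhds hq)).hasFDerivAt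
  exact (hfq.comp_hasDerivAt q.1 ((hasDerivAt_id q.1).prodMk (hasDerivAt_const q.1 q.2))).deriv

theorem ContDiffOn.partialSnd_of_isOpen (hf : ContDiffOn 𝕜 n f U) (hU : IsOpen U)
    (hkn : k + 1 ≤ n) : ContDiffOn 𝕜 k (partialSnd f) U := by
  refine ((hf.fderiv_of_isOpen hU hkn).clm_apply (contDiffOn_const (c := ((0, 1) : 𝕜 × 𝕜)))).congr
    fun q hq => ?_
  have hn : n ≠ 0 := by rintro rfl; simp at hkn
  have hfq : HasFDerivAt f (fderiv 𝕜 f q) q :=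
    ((hf.differentiableOn hn).differentiableAt (hU.mem_nhds hq)).hasFDerivAt
  exact (hfq.comp_hasDerivAt q.2 ((hasDerivAt_const q.2 q.1).prodMk (hasDerivAt_id q.2))).deriv

theorem ContDiffOn.iterate_partialFst (hf : ContDiffOn 𝕜 ∞ f U) (hU : IsOpen U) (j : ℕ) :
    ContDiffOn 𝕜 ∞ (partialFst^[j] f) U := by
  induction j generalizing f with
  | zero => exact hf
  | succ j ih => exact ih (hf.partialFst_of_isOpen hU le_rfl)

theorem ContDiffOn.iterate_partialSnd (hf : ContDiffOn 𝕜 ∞ f U) (hU : IsOpen U) (m : ℕ) :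
    ContDiffOn 𝕜 ∞ (partialSnd^[m] f) U := by
  induction m generalizing f with
  | zero => exact hf
  | succ m ih => exact ih (hf.partialSnd_of_isOpen hU le_rfl)

end Partial

theorem pderiv2_eq_iterate_partial (j m : ℕ) (f : ℝ → ℝ → ℝ) (a b : ℝ) :
    pderiv2 j m f a b = (partialSnd^[m] (partialFst^[j] (Function.uncurry f))) (a, b) := by
  show iteratedDeriv m (fun b' => iteratedDeriv j (fun a' => Function.uncurry f (a', b')) a) b = _
  simp only [iteratedDeriv_eq_iterate_partialFst, iteratedDeriv_eq_iterate_partialSnd]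

theorem continuousOn_pderiv2 {f : ℝ → ℝ → ℝ} {U : Set (ℝ × ℝ)} (hU : IsOpen U)
    (hf : ContDiffOn ℝ ∞ (Function.uncurry f) U) (j m : ℕ) :
    ContinuousOn (fun q : ℝ × ℝ => pderiv2 j m f q.1 q.2) U := by
  simp only [pderiv2_eq_iterate_partial]
  exact ((hf.iterate_partialFst hU j).iterate_partialSnd hU m).continuousOn

theorem pderiv2_const_mul_comp_mul (j m : ℕ) (f : ℝ → ℝ → ℝ) (K c d a b : ℝ) :
    pderiv2 j m (fun a' b' => K * f (c * a') (d * b')) a b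
      = K * c ^ j * d ^ m * pderiv2 j m f (c * a) (d * b) := by
  have inner : ∀ b', iteratedDeriv j (fun a' => K * f (c * a') (d * b')) a
      = K * c ^ j * iteratedDeriv j (fun x => f x (d * b')) (c * a) := fun b' => by
    rw [iteratedDeriv_const_mul_field, iteratedDeriv_comp_mul_left (f := fun x => f x (d * b')),
      smul_eq_mul, mul_assoc]
  simp only [pderiv2, inner, iteratedDeriv_const_mul_field]
  rw [iteratedDeriv_comp_mul_left (f := fun y => iteratedDeriv j (fun x => f x y) (c * a)),
    smul_eq_mul]
  ring

noncomputable def lam1Profile (x y : ℝ) : ℝ := (1 + x)⁻¹ * (1 + √(1 - 4 * y * ((1 + x)⁻¹) ^ 2))⁻¹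

def lam1ProfileDomain : Set (ℝ × ℝ) := {q | 0 < 1 + q.1 ∧ 0 < 1 - 4 * q.2 * ((1 + q.1)⁻¹) ^ 2}

theorem isOpen_lam1ProfileDomain : IsOpen lam1ProfileDomain := by
  have hcont : ContinuousOn (fun q : ℝ × ℝ => 1 - 4 * q.2 * ((1 + q.1)⁻¹) ^ 2) {q | 0 < 1 + q.1} :=
    continuousOn_const.sub ((continuousOn_const.mul continuous_snd.continuousOn).mul
      (((continuousOn_const.add continuous_fst.continuousOn).inv₀ fun _ hq => hq.ne').pow 2))
  exact hcont.isOpen_inter_preimage (isOpen_lt continuous_const (by fun_prop)) isOpen_Ioi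

theorem contDiffOn_lam1Profile : ContDiffOn ℝ ∞ (Function.uncurry lam1Profile) lam1ProfileDomain := by
  intro q hq
  have h1 : ContDiffAt ℝ ∞ (fun q : ℝ × ℝ => (1 + q.1)⁻¹) q :=
    (contDiffAt_const.add contDiffAt_fst).inv hq.1.ne'
  have h2 : ContDiffAt ℝ ∞ (fun q : ℝ × ℝ => √(1 - 4 * q.2 * ((1 + q.1)⁻¹) ^ 2)) q :=
    (contDiffAt_const.sub ((contDiffAt_const.mul contDiffAt_snd).mul (h1.pow 2))).sqrt hq.2.ne'
  exact (h1.mul ((contDiffAt_const.add h2).inv (by positivity))).contDiffWithinAt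

theorem lam1_eq_lam1Profile (σ σ₁ σ₂ r a b : ℝ) :
    lam1 σ σ₁ σ₂ r a b
      = -2 * r ^ (2*(σ-σ₁)) * lam1Profile (r ^ (2*(σ₂-σ₁)) * a) (r ^ (2*(σ-2*σ₁)) * b) := by
  simp only [lam1, Gamma1, Gamma2, lam1Profile]
  ring_nf

theorem pderiv2_lam1 (σ σ₁ σ₂ : ℝ) (j m : ℕ) {r : ℝ} (hr : 0 < r) (a b : ℝ) :
    pderiv2 j m (fun a' b' => lam1 σ σ₁ σ₂ r a' b') a b
      = -2 * pderiv2 j m lam1Profile (r ^ (2*(σ₂-σ₁)) * a) (r ^ (2*(σ-2*σ₁)) * b)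
        * r ^ (2*(σ-σ₁) + 2*(j:ℝ)*(σ₂-σ₁) + 2*(m:ℝ)*(σ-2*σ₁)) := by
  have hpow : r ^ (2*(σ-σ₁) + 2*(j:ℝ)*(σ₂-σ₁) + 2*(m:ℝ)*(σ-2*σ₁))
      = r ^ (2*(σ-σ₁)) * (r ^ (2*(σ₂-σ₁))) ^ j * (r ^ (2*(σ-2*σ₁))) ^ m := by
    rw [← rpow_mul_natCast hr.le, ← rpow_mul_natCast hr.le, ← rpow_add hr, ← rpow_add hr]
    ring_nf
  simp only [lam1_eq_lam1Profile, pderiv2_const_mul_comp_mul, hpow]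
  ring

theorem scaled_mem_lam1ProfileDomain {σ σ₁ σ₂ r a b : ℝ} (hr : 0 ≤ r) (ha : 0 ≤ a)
    (hdisc : 0 < 1 - 4*b*r ^ (2*(σ-2*σ₁)) * (Gamma1 σ₁ σ₂ r a)^2) :
    (r ^ (2*(σ₂-σ₁)) * a, r ^ (2*(σ-2*σ₁)) * b) ∈ lam1ProfileDomain := by
  refine ⟨by positivity, ?_⟩
  convert hdisc using 2
  simp only [Gamma1]
  ring_nf

theorem Icc_prod_Icc_subset_lam1ProfileDomain {σ σ₁ σ₂ ε : ℝ} (hε : 0 < ε)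
    (hdisc : ∀ a ∈ Icc (0:ℝ) 1, ∀ b ∈ Icc (0:ℝ) 1,
      0 < 1 - 4*b*ε ^ (2*(σ-2*σ₁)) * (Gamma1 σ₁ σ₂ ε a)^2) :
    Icc 0 (ε ^ (2*(σ₂-σ₁))) ×ˢ Icc 0 (ε ^ (2*(σ-2*σ₁))) ⊆ lam1ProfileDomain := by
  rintro ⟨x, y⟩ ⟨⟨hx0, hx1⟩, ⟨hy0, hy1⟩⟩
  have hα : 0 < ε ^ (2*(σ₂-σ₁)) := rpow_pos_of_pos hε _
  have hβ : 0 < ε ^ (2*(σ-2*σ₁)) := rpow_pos_of_pos hε _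
  have ha : x / ε ^ (2*(σ₂-σ₁)) ∈ Icc (0:ℝ) 1 := ⟨by positivity, (div_le_one hα).2 hx1⟩
  have hb : y / ε ^ (2*(σ-2*σ₁)) ∈ Icc (0:ℝ) 1 := ⟨by positivity, (div_le_one hβ).2 hy1⟩
  simpa only [mul_div_cancel₀ _ hα.ne', mul_div_cancel₀ _ hβ.ne'] using
    scaled_mem_lam1ProfileDomain hε.le ha.1 (hdisc _ ha _ hb)

theorem rpow_mul_mem_Icc_prod_Icc {α β ε r a b : ℝ} (hα : 0 ≤ α) (hβ : 0 ≤ β)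
    (hr : r ∈ Ioc 0 ε) (ha : a ∈ Icc (0:ℝ) 1) (hb : b ∈ Icc (0:ℝ) 1) :
    (r ^ α * a, r ^ β * b) ∈ Icc 0 (ε ^ α) ×ˢ Icc 0 (ε ^ β) := by
  have hrα : r ^ α ≤ ε ^ α := rpow_le_rpow hr.1.le hr.2 hα
  have hrβ : r ^ β ≤ ε ^ β := rpow_le_rpow hr.1.le hr.2 hβ
  have hrα₀ : 0 ≤ r ^ α := rpow_nonneg hr.1.le α
  have hrβ₀ : 0 ≤ r ^ β := rpow_nonneg hr.1.le β
  exact ⟨⟨mul_nonneg hrα₀ ha.1, (mul_le_of_le_one_right hrα₀ ha.2).trans hrα⟩,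
    ⟨mul_nonneg hrβ₀ hb.1, (mul_le_of_le_one_right hrβ₀ hb.2).trans hrβ⟩⟩

theorem stmt2_general (σ σ₁ σ₂ εs : ℝ) (h12 : σ₁ < σ / 2)
    (h22 : σ / 2 < σ₂) (hε : 0 < εs)
    (hpos : ∀ r ∈ Set.Ioc (0:ℝ) εs, ∀ a ∈ Set.Icc (0:ℝ) 1, ∀ b ∈ Set.Icc (0:ℝ) 1,
      0 < 1 - 4*b*r ^ (2*(σ-2*σ₁)) * (Gamma1 σ₁ σ₂ r a)^2)
    (j m : ℕ) :
    (∃ C > 0, ∀ r ∈ Set.Ioc (0:ℝ) εs, ∀ a ∈ Set.Icc (0:ℝ) 1, ∀ b ∈ Set.Icc (0:ℝ) 1,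
      |pderiv2 j m (fun a' b' => lam1 σ σ₁ σ₂ r a' b') a b|
        ≤ C * r ^ (2*(σ-σ₁) + 2*(j:ℝ)*(σ₂-σ₁) + 2*(m:ℝ)*(σ-2*σ₁))) ∧
    (∃ C1jm : ℝ, ∀ r ∈ Set.Ioc (0:ℝ) εs,
      pderiv2 j m (fun a' b' => lam1 σ σ₁ σ₂ r a' b') 0 0
        = C1jm * r ^ (2*(σ-σ₁) + 2*(j:ℝ)*(σ₂-σ₁) + 2*(m:ℝ)*(σ-2*σ₁))) := by
  have hα : 0 ≤ 2*(σ₂-σ₁) := by linarith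
  have hβ : 0 ≤ 2*(σ-2*σ₁) := by linarith
  have hK := Icc_prod_Icc_subset_lam1ProfileDomain hε (hpos εs ⟨hε, le_rfl⟩)
  obtain ⟨C₀, hC₀⟩ := (isCompact_Icc.prod isCompact_Icc).exists_bound_of_continuousOn
    ((continuousOn_pderiv2 isOpen_lam1ProfileDomain contDiffOn_lam1Profile j m).mono hK)
  refine ⟨⟨2 * |C₀| + 1, by positivity, fun r hr a ha b hb => ?_⟩,
    ⟨-2 * pderiv2 j m lam1Profile 0 0, fun r hr => by simp [pderiv2_lam1 σ σ₁ σ₂ j m hr.1]⟩⟩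
  have hP := hC₀ _ (rpow_mul_mem_Icc_prod_Icc hα hβ hr ha hb)
  rw [Real.norm_eq_abs] at hP
  rw [pderiv2_lam1 σ σ₁ σ₂ j m hr.1, abs_mul, abs_mul, abs_of_pos (rpow_pos_of_pos hr.1 _)]
  refine mul_le_mul_of_nonneg_right ?_ (rpow_nonneg hr.1.le _)
  rw [abs_neg, abs_two]
  linarith [le_abs_self C₀]

theorem stmt2 (σ σ₁ σ₂ εs : ℝ) (hσ : 1 ≤ σ) (hσ₁ : 0 ≤ σ₁) (h12 : σ₁ < σ / 2)
    (h22 : σ / 2 < σ₂) (h2σ : σ₂ ≤ σ) (hε : 0 < εs)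
    (hpos : ∀ r ∈ Set.Ioc (0:ℝ) εs, ∀ a ∈ Set.Icc (0:ℝ) 1, ∀ b ∈ Set.Icc (0:ℝ) 1,
      0 < 1 - 4*b*r ^ (2*(σ-2*σ₁)) * (Gamma1 σ₁ σ₂ r a)^2)
    (j m : ℕ) :
    (∃ C > 0, ∀ r ∈ Set.Ioc (0:ℝ) εs, ∀ a ∈ Set.Icc (0:ℝ) 1, ∀ b ∈ Set.Icc (0:ℝ) 1,
      |pderiv2 j m (fun a' b' => lam1 σ σ₁ σ₂ r a' b') a b|
        ≤ C * r ^ (2*(σ-σ₁) + 2*(j:ℝ)*(σ₂-σ₁) + 2*(m:ℝ)*(σ-2*σ₁))) ∧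
    (∃ C1jm : ℝ, ∀ r ∈ Set.Ioc (0:ℝ) εs,
      pderiv2 j m (fun a' b' => lam1 σ σ₁ σ₂ r a' b') 0 0
        = C1jm * r ^ (2*(σ-σ₁) + 2*(j:ℝ)*(σ₂-σ₁) + 2*(m:ℝ)*(σ-2*σ₁))) :=
  stmt2_general σ σ₁ σ₂ εs h12 h22 hε hpos j m
end

section
/- With λ₁⁰ as above, for all j, m ∈ ℕ and t > 0, |∂^{j+m}/(∂aʲ ∂bᵐ) e^{λ₁⁰(r,a,b) t}| ≤ C e^{-c r^{2(σ-σ₁)} t} r^{2j(σ₂-σ₁)+2m(σ-2σ₁)} for all (r,a,b) ∈ (0,ε*] × [0,1]² with suitable positive constants C, c independent of r, a, b, t. -/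
/-!
Every mixed derivative `∂ₐʲ ∂_bᵐ e^{λ₁⁰ t}` is `e^{λ₁⁰ t}` times a polynomial in
`X Γ₁, b Y Γ₁², Y Γ₁², Γ₂⁻¹, (1 + Γ₂)⁻¹` and `λ₁⁰ t`, where `X = r^{2(σ₂-σ₁)}` and
`Y = r^{2(σ-2σ₁)}`: this algebra is closed under `∂ₐ` and `∂_b`, and every `∂ₐ` brings out a
factor `X`, every `∂_b` a factor `Y`. On the region `Γ₁ ≤ 1`, `b Y Γ₁² < 1/4` and
`Γ₂ ≥ (1 - 4 ε*^{2(σ-2σ₁)})^{1/2} > 0`, so the polynomial is `O(Xʲ Yᵐ (1 + |λ₁⁰ t|)ⁿ)`, and the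
power of `|λ₁⁰ t|` is absorbed by half of the decay of `e^{λ₁⁰ t} ≤ e^{-c₁ r^{2(σ-σ₁)} t}`.
-/

open Real Set

open Filter Topology

namespace Lam1

variable {σ σ₁ σ₂ : ℝ}

noncomputable def discr (σ σ₁ σ₂ r a b : ℝ) : ℝ :=
  1 - 4*b*r ^ (2*(σ-2*σ₁)) * (Gamma1 σ₁ σ₂ r a)^2

theorem Gamma2_eq_sqrt_discr (σ σ₁ σ₂ r a b : ℝ) :
    Gamma2 σ σ₁ σ₂ r a b = √(discr σ σ₁ σ₂ r a b) := rfl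

def Regular (σ σ₁ σ₂ r a b : ℝ) : Prop :=
  1 + a * r ^ (2*(σ₂-σ₁)) ≠ 0 ∧ 0 < discr σ σ₁ σ₂ r a b

section Derivatives

variable {r a b : ℝ}

theorem Gamma2_pos (h : 0 < discr σ σ₁ σ₂ r a b) : 0 < Gamma2 σ σ₁ σ₂ r a b :=
  Real.sqrt_pos.2 h

theorem hasDerivAt_Gamma1 (ha : 1 + a * r ^ (2*(σ₂-σ₁)) ≠ 0) :
    HasDerivAt (fun x => Gamma1 σ₁ σ₂ r x) (-(r ^ (2*(σ₂-σ₁)) * Gamma1 σ₁ σ₂ r a ^ 2)) a := by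
  refine ((((hasDerivAt_id a).mul_const (r ^ (2*(σ₂-σ₁)))).const_add 1).inv ha).congr_deriv ?_
  simp [Gamma1, div_eq_mul_inv]

theorem hasDerivAt_discr_fst (ha : 1 + a * r ^ (2*(σ₂-σ₁)) ≠ 0) :
    HasDerivAt (fun x => discr σ σ₁ σ₂ r x b)
      (8 * (r ^ (2*(σ₂-σ₁)) * Gamma1 σ₁ σ₂ r a)
        * (b * (r ^ (2*(σ-2*σ₁)) * Gamma1 σ₁ σ₂ r a ^ 2))) a := by
  refine ((((hasDerivAt_Gamma1 ha).pow 2).const_mul (4*b*r ^ (2*(σ-2*σ₁)))).const_sub 1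
    ).congr_deriv ?_
  push_cast; ring

theorem hasDerivAt_discr_snd :
    HasDerivAt (fun y => discr σ σ₁ σ₂ r a y)
      (-4 * (r ^ (2*(σ-2*σ₁)) * Gamma1 σ₁ σ₂ r a ^ 2)) b := by
  refine (((((hasDerivAt_id b).const_mul 4).mul_const (r ^ (2*(σ-2*σ₁)))).mul_const
    (Gamma1 σ₁ σ₂ r a ^ 2)).const_sub 1).congr_deriv ?_
  ring

theorem hasDerivAt_Gamma2_fst (h : Regular σ σ₁ σ₂ r a b) :
    HasDerivAt (fun x => Gamma2 σ σ₁ σ₂ r x b)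
      (4 * (r ^ (2*(σ₂-σ₁)) * Gamma1 σ₁ σ₂ r a) * (b * (r ^ (2*(σ-2*σ₁)) * Gamma1 σ₁ σ₂ r a ^ 2))
        * (Gamma2 σ σ₁ σ₂ r a b)⁻¹) a := by
  refine ((hasDerivAt_discr_fst h.1).sqrt h.2.ne').congr_deriv ?_
  rw [Gamma2_eq_sqrt_discr]
  field_simp
  ring

theorem hasDerivAt_Gamma2_snd (h : 0 < discr σ σ₁ σ₂ r a b) :
    HasDerivAt (fun y => Gamma2 σ σ₁ σ₂ r a y)
      (-2 * (r ^ (2*(σ-2*σ₁)) * Gamma1 σ₁ σ₂ r a ^ 2) * (Gamma2 σ σ₁ σ₂ r a b)⁻¹) b := by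
  refine (hasDerivAt_discr_snd.sqrt h.ne').congr_deriv ?_
  rw [Gamma2_eq_sqrt_discr]
  field_simp
  ring

theorem Regular.eventually_fst (h : Regular σ σ₁ σ₂ r a b) :
    ∀ᶠ x in 𝓝 a, Regular σ σ₁ σ₂ r x b :=
  ((continuous_const.add (continuous_id.mul continuous_const)).continuousAt.eventually_ne h.1).and
    ((hasDerivAt_discr_fst h.1).continuousAt.eventually (lt_mem_nhds h.2))

theorem Regular.eventually_snd (h : Regular σ σ₁ σ₂ r a b) :
    ∀ᶠ y in 𝓝 b, Regular σ σ₁ σ₂ r a y :=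
  .and (.of_forall fun _ => h.1) (hasDerivAt_discr_snd.continuousAt.eventually (lt_mem_nhds h.2))

end Derivatives

/-- The grade `(p, q)` records the factor `r^{2p(σ₂-σ₁)} r^{2q(σ-2σ₁)}` that `IsSymbol.abs_le`
gains. -/
inductive IsSymbol (σ σ₁ σ₂ : ℝ) : ℕ → ℕ → (ℝ → ℝ → ℝ → ℝ → ℝ) → Prop
  | const (c : ℝ) : IsSymbol σ σ₁ σ₂ 0 0 fun _ _ _ _ => c
  | zero (p q : ℕ) : IsSymbol σ σ₁ σ₂ p q fun _ _ _ _ => 0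
  | xGamma1 : IsSymbol σ σ₁ σ₂ 1 0 fun r _ a _ => r ^ (2*(σ₂-σ₁)) * Gamma1 σ₁ σ₂ r a
  | byGamma1Sq :
      IsSymbol σ σ₁ σ₂ 0 0 fun r _ a b => b * (r ^ (2*(σ-2*σ₁)) * Gamma1 σ₁ σ₂ r a ^ 2)
  | yGamma1Sq : IsSymbol σ σ₁ σ₂ 0 1 fun r _ a _ => r ^ (2*(σ-2*σ₁)) * Gamma1 σ₁ σ₂ r a ^ 2
  | invGamma2 : IsSymbol σ σ₁ σ₂ 0 0 fun r _ a b => (Gamma2 σ σ₁ σ₂ r a b)⁻¹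
  | invOneAddGamma2 : IsSymbol σ σ₁ σ₂ 0 0 fun r _ a b => (1 + Gamma2 σ σ₁ σ₂ r a b)⁻¹
  | lam1Mul : IsSymbol σ σ₁ σ₂ 0 0 fun r t a b => lam1 σ σ₁ σ₂ r a b * t
  | add {p q f g} : IsSymbol σ σ₁ σ₂ p q f → IsSymbol σ σ₁ σ₂ p q g →
      IsSymbol σ σ₁ σ₂ p q fun r t a b => f r t a b + g r t a b
  | mul {p q p' q' f g} : IsSymbol σ σ₁ σ₂ p q f → IsSymbol σ σ₁ σ₂ p' q' g →
      IsSymbol σ σ₁ σ₂ (p + p') (q + q') fun r t a b => f r t a b * g r t a b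

theorem IsSymbol.cast {p q p' q' : ℕ} {f : ℝ → ℝ → ℝ → ℝ → ℝ} (hf : IsSymbol σ σ₁ σ₂ p q f)
    (hp : p = p') (hq : q = q') : IsSymbol σ σ₁ σ₂ p' q' f := hp ▸ hq ▸ hf

section Bounds

variable {r a b : ℝ}

theorem Gamma1_mem_Icc (hr : 0 ≤ r) (ha : 0 ≤ a) : Gamma1 σ₁ σ₂ r a ∈ Icc 0 1 := by
  have hu : 1 ≤ 1 + a * r ^ (2*(σ₂-σ₁)) := le_add_of_nonneg_right (by positivity)
  exact ⟨inv_nonneg.2 (zero_le_one.trans hu), inv_le_one_of_one_le₀ hu⟩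

theorem abs_byGamma1Sq_le (hr : 0 ≤ r) (hb : 0 ≤ b) (h : 0 < discr σ σ₁ σ₂ r a b) :
    |b * (r ^ (2*(σ-2*σ₁)) * Gamma1 σ₁ σ₂ r a ^ 2)| ≤ 1 := by
  have hY : 0 ≤ r ^ (2*(σ-2*σ₁)) * Gamma1 σ₁ σ₂ r a ^ 2 := by positivity
  unfold discr at h
  rw [abs_of_nonneg (mul_nonneg hb hY)]
  nlinarith

end Bounds

theorem IsSymbol.abs_le {δ : ℝ} (hδ : 0 < δ) {p q : ℕ} {f : ℝ → ℝ → ℝ → ℝ → ℝ}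
    (hf : IsSymbol σ σ₁ σ₂ p q f) :
    ∃ K n, 0 ≤ K ∧ ∀ r t a b, 0 ≤ r → 0 ≤ a → 0 ≤ b → δ ≤ discr σ σ₁ σ₂ r a b →
      |f r t a b| ≤ K * (r ^ (2*(σ₂-σ₁))) ^ p * (r ^ (2*(σ-2*σ₁))) ^ q
        * (1 + |lam1 σ σ₁ σ₂ r a b * t|) ^ n := by
  induction hf with
  | const c => exact ⟨|c|, 0, abs_nonneg c, fun r t a b _ _ _ _ => by simp⟩
  | zero p q => exact ⟨0, 0, le_rfl, fun r t a b _ _ _ _ => by simp⟩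
  | xGamma1 =>
    refine ⟨1, 0, zero_le_one, fun r t a b hr ha _ _ => ?_⟩
    obtain ⟨h0, h1⟩ := Gamma1_mem_Icc (σ₁ := σ₁) (σ₂ := σ₂) hr ha
    simp only [pow_one, pow_zero, mul_one, one_mul]
    rw [abs_of_nonneg (by positivity)]
    exact mul_le_of_le_one_right (by positivity) h1
  | byGamma1Sq =>
    exact ⟨1, 0, zero_le_one, fun r t a b hr _ hb h => by
      simpa using abs_byGamma1Sq_le hr hb (hδ.trans_le h)⟩
  | yGamma1Sq =>
    refine ⟨1, 0, zero_le_one, fun r t a b hr ha _ _ => ?_⟩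
    obtain ⟨h0, h1⟩ := Gamma1_mem_Icc (σ₁ := σ₁) (σ₂ := σ₂) hr ha
    simp only [pow_one, pow_zero, mul_one, one_mul]
    rw [abs_of_nonneg (by positivity)]
    exact mul_le_of_le_one_right (by positivity) (pow_le_one₀ h0 h1)
  | invGamma2 =>
    refine ⟨(√δ)⁻¹, 0, by positivity, fun r t a b _ _ _ h => ?_⟩
    have hΓ : √δ ≤ Gamma2 σ σ₁ σ₂ r a b := Real.sqrt_le_sqrt h
    simp only [pow_zero, mul_one]
    rw [abs_of_nonneg (inv_nonneg.2 ((sqrt_nonneg δ).trans hΓ))]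
    exact inv_anti₀ (sqrt_pos.2 hδ) hΓ
  | invOneAddGamma2 =>
    refine ⟨1, 0, zero_le_one, fun r t a b _ _ _ _ => ?_⟩
    have h1 : 1 ≤ 1 + Gamma2 σ σ₁ σ₂ r a b := le_add_of_nonneg_right (sqrt_nonneg _)
    simp only [pow_zero, mul_one]
    rw [abs_of_nonneg (inv_nonneg.2 (zero_le_one.trans h1))]
    exact inv_le_one_of_one_le₀ h1
  | lam1Mul => exact ⟨1, 1, zero_le_one, fun r t a b _ _ _ _ => by simp⟩
  | add _ _ ihf ihg =>
    obtain ⟨K₁, n₁, hK₁, hf⟩ := ihf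
    obtain ⟨K₂, n₂, hK₂, hg⟩ := ihg
    refine ⟨K₁ + K₂, max n₁ n₂, add_nonneg hK₁ hK₂, fun r t a b hr ha hb h => ?_⟩
    have hZ : 1 ≤ 1 + |lam1 σ σ₁ σ₂ r a b * t| := le_add_of_nonneg_right (abs_nonneg _)
    calc _ ≤ _ := abs_add_le _ _
      _ ≤ _ := add_le_add (hf r t a b hr ha hb h) (hg r t a b hr ha hb h)
      _ ≤ _ := by
        simp only [add_mul]
        gcongr <;> first | exact hZ | omega
  | mul _ _ ihf ihg =>
    obtain ⟨K₁, n₁, hK₁, hf⟩ := ihf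
    obtain ⟨K₂, n₂, hK₂, hg⟩ := ihg
    refine ⟨K₁ * K₂, n₁ + n₂, mul_nonneg hK₁ hK₂, fun r t a b hr ha hb h => ?_⟩
    rw [abs_mul]
    calc _ ≤ _ := mul_le_mul (hf r t a b hr ha hb h) (hg r t a b hr ha hb h) (abs_nonneg _)
          (by positivity)
      _ = _ := by ring

open IsSymbol in
theorem IsSymbol.exists_hasDerivAt_fst {p q : ℕ} {f : ℝ → ℝ → ℝ → ℝ → ℝ}
    (hf : IsSymbol σ σ₁ σ₂ p q f) :
    ∃ f', IsSymbol σ σ₁ σ₂ (p + 1) q f' ∧ ∀ r t a b, Regular σ σ₁ σ₂ r a b →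
      HasDerivAt (fun x => f r t x b) (f' r t a b) a := by
  induction hf with
  | const c => exact ⟨_, zero 1 0, fun r t a b _ => hasDerivAt_const a c⟩
  | zero p q => exact ⟨_, zero (p + 1) q, fun r t a b _ => hasDerivAt_const a 0⟩
  | xGamma1 =>
    refine ⟨_, (const (-1)).mul (xGamma1.mul xGamma1), fun r t a b h => ?_⟩
    refine ((hasDerivAt_Gamma1 h.1).const_mul _).congr_deriv ?_
    ring
  | byGamma1Sq =>
    refine ⟨_, (const (-2)).mul (xGamma1.mul byGamma1Sq), fun r t a b h => ?_⟩
    refine ((((hasDerivAt_Gamma1 h.1).pow 2).const_mul _).const_mul b).congr_deriv ?_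
    push_cast; ring
  | yGamma1Sq =>
    refine ⟨_, (const (-2)).mul (xGamma1.mul yGamma1Sq), fun r t a b h => ?_⟩
    refine (((hasDerivAt_Gamma1 h.1).pow 2).const_mul _).congr_deriv ?_
    push_cast; ring
  | invGamma2 =>
    refine ⟨_, (const (-4)).mul (xGamma1.mul (byGamma1Sq.mul
      (invGamma2.mul (invGamma2.mul invGamma2)))), fun r t a b h => ?_⟩
    refine ((hasDerivAt_Gamma2_fst h).inv (Gamma2_pos h.2).ne').congr_deriv ?_
    field_simp
  | invOneAddGamma2 =>
    refine ⟨_, (const (-4)).mul (xGamma1.mul (byGamma1Sq.mul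
      (invGamma2.mul (invOneAddGamma2.mul invOneAddGamma2)))), fun r t a b h => ?_⟩
    have h1 : 1 + Gamma2 σ σ₁ σ₂ r a b ≠ 0 := by have := Gamma2_pos h.2; positivity
    refine (((hasDerivAt_Gamma2_fst h).const_add 1).inv h1).congr_deriv ?_
    field_simp
  | lam1Mul =>
    refine ⟨_, (const (-1)).mul (lam1Mul.mul (xGamma1.add ((const 4).mul (xGamma1.mul
      (byGamma1Sq.mul (invGamma2.mul invOneAddGamma2)))))), fun r t a b h => ?_⟩
    have h1 : 1 + Gamma2 σ σ₁ σ₂ r a b ≠ 0 := by have := Gamma2_pos h.2; positivity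
    refine ((((hasDerivAt_Gamma1 h.1).const_mul (-2 * r ^ (2*(σ-σ₁)))).mul
      (((hasDerivAt_Gamma2_fst h).const_add 1).inv h1)).mul_const t).congr_deriv ?_
    simp only [lam1, Pi.inv_apply]
    field_simp
  | add _ _ ihf ihg =>
    obtain ⟨f', hf', hf⟩ := ihf
    obtain ⟨g', hg', hg⟩ := ihg
    exact ⟨_, hf'.add hg', fun r t a b h => (hf r t a b h).add (hg r t a b h)⟩
  | @mul p q p' q' f g hf hg ihf ihg =>
    obtain ⟨f', hf', hdf⟩ := ihf
    obtain ⟨g', hg', hdg⟩ := ihg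
    exact ⟨_, ((hf'.mul hg).cast (by omega) rfl).add ((hf.mul hg').cast (by omega) rfl),
      fun r t a b h => (hdf r t a b h).mul (hdg r t a b h)⟩

open IsSymbol in
theorem IsSymbol.exists_hasDerivAt_snd {p q : ℕ} {f : ℝ → ℝ → ℝ → ℝ → ℝ}
    (hf : IsSymbol σ σ₁ σ₂ p q f) :
    ∃ f', IsSymbol σ σ₁ σ₂ p (q + 1) f' ∧ ∀ r t a b, 0 < discr σ σ₁ σ₂ r a b →
      HasDerivAt (fun y => f r t a y) (f' r t a b) b := by
  induction hf with
  | const c => exact ⟨_, zero 0 1, fun r t a b _ => hasDerivAt_const b c⟩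
  | zero p q => exact ⟨_, zero p (q + 1), fun r t a b _ => hasDerivAt_const b 0⟩
  | xGamma1 => exact ⟨_, zero 1 1, fun r t a b _ => hasDerivAt_const b _⟩
  | byGamma1Sq =>
    refine ⟨_, yGamma1Sq, fun r t a b _ => ((hasDerivAt_id b).mul_const _).congr_deriv ?_⟩
    simp
  | yGamma1Sq => exact ⟨_, zero 0 2, fun r t a b _ => hasDerivAt_const b _⟩
  | invGamma2 =>
    refine ⟨_, (const 2).mul (yGamma1Sq.mul (invGamma2.mul (invGamma2.mul invGamma2))),
      fun r t a b h => ?_⟩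
    refine ((hasDerivAt_Gamma2_snd h).inv (Gamma2_pos h).ne').congr_deriv ?_
    field_simp
  | invOneAddGamma2 =>
    refine ⟨_, (const 2).mul (yGamma1Sq.mul (invGamma2.mul
      (invOneAddGamma2.mul invOneAddGamma2))), fun r t a b h => ?_⟩
    have h1 : 1 + Gamma2 σ σ₁ σ₂ r a b ≠ 0 := by have := Gamma2_pos h; positivity
    refine (((hasDerivAt_Gamma2_snd h).const_add 1).inv h1).congr_deriv ?_
    field_simp
  | lam1Mul =>
    refine ⟨_, (const 2).mul (lam1Mul.mul (yGamma1Sq.mul (invGamma2.mul invOneAddGamma2))),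
      fun r t a b h => ?_⟩
    have h1 : 1 + Gamma2 σ σ₁ σ₂ r a b ≠ 0 := by have := Gamma2_pos h; positivity
    refine (((((hasDerivAt_Gamma2_snd h).const_add 1).inv h1).const_mul
      (-2 * r ^ (2*(σ-σ₁)) * Gamma1 σ₁ σ₂ r a)).mul_const t).congr_deriv ?_
    simp only [lam1]
    field_simp
  | add _ _ ihf ihg =>
    obtain ⟨f', hf', hf⟩ := ihf
    obtain ⟨g', hg', hg⟩ := ihg
    exact ⟨_, hf'.add hg', fun r t a b h => (hf r t a b h).add (hg r t a b h)⟩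
  | @mul p q p' q' f g hf hg ihf ihg =>
    obtain ⟨f', hf', hdf⟩ := ihf
    obtain ⟨g', hg', hdg⟩ := ihg
    exact ⟨_, ((hf'.mul hg).cast rfl (by omega)).add ((hf.mul hg').cast rfl (by omega)),
      fun r t a b h => (hdf r t a b h).mul (hdg r t a b h)⟩

theorem deriv_eq_exp_mul_of_eventuallyEq {g L Q : ℝ → ℝ} {x L' Q' : ℝ}
    (hg : g =ᶠ[𝓝 x] fun y => exp (L y) * Q y) (hL : HasDerivAt L L' x)
    (hQ : HasDerivAt Q Q' x) :
    deriv g x = exp (L x) * (L' * Q x + Q') := by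
  rw [hg.deriv_eq]
  exact (hL.exp.mul hQ).deriv.trans (by ring)

theorem exists_iteratedDeriv_fst_eq (j : ℕ) :
    ∃ Q, IsSymbol σ σ₁ σ₂ j 0 Q ∧ ∀ r t a b, Regular σ σ₁ σ₂ r a b →
      iteratedDeriv j (fun x => exp (lam1 σ σ₁ σ₂ r x b * t)) a
        = exp (lam1 σ σ₁ σ₂ r a b * t) * Q r t a b := by
  induction j with
  | zero => exact ⟨_, .const 1, fun r t a b _ => by simp⟩
  | succ j ih =>
    obtain ⟨Q, hQ, hrepr⟩ := ih
    obtain ⟨Q', hQ', hdQ⟩ := hQ.exists_hasDerivAt_fst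
    obtain ⟨L', hL', hdL⟩ :=
      (IsSymbol.lam1Mul (σ := σ) (σ₁ := σ₁) (σ₂ := σ₂)).exists_hasDerivAt_fst
    refine ⟨_, ((hL'.mul hQ).cast (by omega) rfl).add hQ', fun r t a b h => ?_⟩
    rw [iteratedDeriv_succ]
    exact deriv_eq_exp_mul_of_eventuallyEq (h.eventually_fst.mono fun x hx => hrepr r t x b hx)
      (hdL r t a b h) (hdQ r t a b h)

theorem exists_pderiv2_eq (j m : ℕ) :
    ∃ P, IsSymbol σ σ₁ σ₂ j m P ∧ ∀ r t a b, Regular σ σ₁ σ₂ r a b →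
      pderiv2 j m (fun a' b' => exp (lam1 σ σ₁ σ₂ r a' b' * t)) a b
        = exp (lam1 σ σ₁ σ₂ r a b * t) * P r t a b := by
  induction m with
  | zero => simpa [pderiv2] using exists_iteratedDeriv_fst_eq j
  | succ m ih =>
    obtain ⟨P, hP, hrepr⟩ := ih
    obtain ⟨P', hP', hdP⟩ := hP.exists_hasDerivAt_snd
    obtain ⟨L', hL', hdL⟩ :=
      (IsSymbol.lam1Mul (σ := σ) (σ₁ := σ₁) (σ₂ := σ₂)).exists_hasDerivAt_snd
    refine ⟨_, ((hL'.mul hP).cast (by omega) (by omega)).add hP', fun r t a b h => ?_⟩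
    rw [pderiv2, iteratedDeriv_succ]
    exact deriv_eq_exp_mul_of_eventuallyEq (h.eventually_snd.mono fun y hy => hrepr r t a y hy)
      (hdL r t a b h.2) (hdP r t a b h.2)

theorem discr_zero_one_le_discr {ε r a b : ℝ} (hσ : 2 * σ₁ ≤ σ) (hr : 0 ≤ r) (hrε : r ≤ ε)
    (ha : 0 ≤ a) (hb : b ∈ Icc (0:ℝ) 1) :
    discr σ σ₁ σ₂ ε 0 1 ≤ discr σ σ₁ σ₂ r a b := by
  have hY : r ^ (2*(σ-2*σ₁)) ≤ ε ^ (2*(σ-2*σ₁)) := rpow_le_rpow hr hrε (by linarith)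
  obtain ⟨hΓ₀, hΓ₁⟩ := Gamma1_mem_Icc (σ₁ := σ₁) (σ₂ := σ₂) hr ha
  have hΓ : Gamma1 σ₁ σ₂ r a ^ 2 ≤ 1 := pow_le_one₀ hΓ₀ hΓ₁
  have hbY : b * r ^ (2*(σ-2*σ₁)) ≤ ε ^ (2*(σ-2*σ₁)) :=
    (mul_le_of_le_one_left (by positivity) hb.2).trans hY
  have hΓε : Gamma1 σ₁ σ₂ ε 0 = 1 := by simp [Gamma1]
  simp only [discr, hΓε, one_pow, mul_one]
  nlinarith [mul_le_mul hbY hΓ (sq_nonneg _) ((rpow_nonneg hr _).trans hY)]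

theorem one_add_pow_le_mul_exp_half (n : ℕ) {x : ℝ} (hx : 0 ≤ x) :
    (1 + x) ^ n ≤ (2 * n + 1) ^ n * exp (x / 2) := by
  set N : ℝ := 2 * n + 1
  have hN : 1 ≤ N := by simp [N]
  have h1 : 1 + x ≤ N * exp (x / N) :=
    calc 1 + x ≤ N * (x / N + 1) := by field_simp; linarith
      _ ≤ N * exp (x / N) := by gcongr; exact add_one_le_exp _
  calc (1 + x) ^ n ≤ (N * exp (x / N)) ^ n := by gcongr
    _ = N ^ n * exp (n * (x / N)) := by rw [mul_pow, exp_nat_mul]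
    _ ≤ N ^ n * exp (x / 2) := by
      gcongr
      rw [← mul_div_assoc, div_le_div_iff₀ (by positivity) two_pos]
      nlinarith

theorem exp_mul_one_add_abs_pow_le (n : ℕ) {L c : ℝ} (hc : 0 ≤ c) (hL : L ≤ -c) :
    exp L * (1 + |L|) ^ n ≤ (2 * n + 1) ^ n * exp (-c / 2) := by
  rw [abs_of_nonpos (by linarith)]
  calc exp L * (1 + -L) ^ n ≤ exp L * ((2 * n + 1) ^ n * exp (-L / 2)) := by
        gcongr; exact one_add_pow_le_mul_exp_half n (by linarith)
    _ = (2 * n + 1) ^ n * exp (L / 2) := by rw [mul_left_comm, ← exp_add]; ring_nf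
    _ ≤ (2 * n + 1) ^ n * exp (-c / 2) := by gcongr

end Lam1

open Lam1 in
theorem stmt4_general (σ σ₁ σ₂ εs c₁ : ℝ) (h12 : σ₁ < σ / 2)
    (hε : 0 < εs) (hc₁ : 0 < c₁)
    (hpos : ∀ r ∈ Set.Ioc (0:ℝ) εs, ∀ a ∈ Set.Icc (0:ℝ) 1, ∀ b ∈ Set.Icc (0:ℝ) 1,
      0 < 1 - 4*b*r ^ (2*(σ-2*σ₁)) * (Gamma1 σ₁ σ₂ r a)^2)
    (hlam : ∀ r ∈ Set.Ioc (0:ℝ) εs, ∀ a ∈ Set.Icc (0:ℝ) 1, ∀ b ∈ Set.Icc (0:ℝ) 1,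
      lam1 σ σ₁ σ₂ r a b ≤ -c₁ * r ^ (2*(σ-σ₁)))
    (j m : ℕ) :
    ∃ C > 0, ∃ c > 0, ∀ t > 0, ∀ r ∈ Set.Ioc (0:ℝ) εs, ∀ a ∈ Set.Icc (0:ℝ) 1,
      ∀ b ∈ Set.Icc (0:ℝ) 1,
      |pderiv2 j m (fun a' b' => Real.exp (lam1 σ σ₁ σ₂ r a' b' * t)) a b|
        ≤ C * Real.exp (-c * r ^ (2*(σ-σ₁)) * t)
            * r ^ (2*(j:ℝ)*(σ₂-σ₁) + 2*(m:ℝ)*(σ-2*σ₁)) := by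
  obtain ⟨P, hP, hrepr⟩ := exists_pderiv2_eq (σ := σ) (σ₁ := σ₁) (σ₂ := σ₂) j m
  have hδ : 0 < discr σ σ₁ σ₂ εs 0 1 :=
    hpos εs ⟨hε, le_rfl⟩ 0 ⟨le_rfl, zero_le_one⟩ 1 ⟨zero_le_one, le_rfl⟩
  obtain ⟨K, n, hK, hbound⟩ := hP.abs_le hδ
  refine ⟨(K + 1) * (2 * n + 1) ^ n, by positivity, c₁ / 2, by positivity,
    fun t ht r hr a ha b hb => ?_⟩
  have hr0 := hr.1
  have hreg : Regular σ σ₁ σ₂ r a b := ⟨by have := ha.1; positivity, hpos r hr a ha b hb⟩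
  have hPle := hbound r t a b hr0.le ha.1 hb.1
    (discr_zero_one_le_discr (by linarith) hr0.le hr.2 ha.1 hb)
  have hexp := exp_mul_one_add_abs_pow_le n (L := lam1 σ σ₁ σ₂ r a b * t)
    (c := c₁ * r ^ (2*(σ-σ₁)) * t) (by positivity) (by nlinarith [hlam r hr a ha b hb])
  have hXY : (r ^ (2*(σ₂-σ₁))) ^ j * (r ^ (2*(σ-2*σ₁))) ^ m
      = r ^ (2*(j:ℝ)*(σ₂-σ₁) + 2*(m:ℝ)*(σ-2*σ₁)) := by
    rw [← rpow_mul_natCast hr0.le, ← rpow_mul_natCast hr0.le, ← rpow_add hr0]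
    ring_nf
  rw [hrepr r t a b hreg, abs_mul, abs_of_pos (exp_pos _), ← hXY]
  set L := lam1 σ σ₁ σ₂ r a b * t
  set XY := (r ^ (2*(σ₂-σ₁))) ^ j * (r ^ (2*(σ-2*σ₁))) ^ m
  calc exp L * |P r t a b| ≤ exp L * (K * XY * (1 + |L|) ^ n) := by
        gcongr; simpa only [XY, mul_assoc] using hPle
    _ = K * XY * (exp L * (1 + |L|) ^ n) := by ring
    _ ≤ (K + 1) * XY * ((2 * n + 1) ^ n * exp (-(c₁ * r ^ (2*(σ-σ₁)) * t) / 2)) := by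
        gcongr; linarith
    _ = _ := by ring_nf

theorem stmt4 (σ σ₁ σ₂ εs c₁ : ℝ) (hσ : 1 ≤ σ) (hσ₁ : 0 ≤ σ₁) (h12 : σ₁ < σ / 2)
    (h22 : σ / 2 < σ₂) (h2σ : σ₂ ≤ σ) (hε : 0 < εs) (hc₁ : 0 < c₁)
    (hpos : ∀ r ∈ Set.Ioc (0:ℝ) εs, ∀ a ∈ Set.Icc (0:ℝ) 1, ∀ b ∈ Set.Icc (0:ℝ) 1,
      0 < 1 - 4*b*r ^ (2*(σ-2*σ₁)) * (Gamma1 σ₁ σ₂ r a)^2)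
    (hlam : ∀ r ∈ Set.Ioc (0:ℝ) εs, ∀ a ∈ Set.Icc (0:ℝ) 1, ∀ b ∈ Set.Icc (0:ℝ) 1,
      lam1 σ σ₁ σ₂ r a b ≤ -c₁ * r ^ (2*(σ-σ₁)))
    (j m : ℕ) :
    ∃ C > 0, ∃ c > 0, ∀ t > 0, ∀ r ∈ Set.Ioc (0:ℝ) εs, ∀ a ∈ Set.Icc (0:ℝ) 1,
      ∀ b ∈ Set.Icc (0:ℝ) 1,
      |pderiv2 j m (fun a' b' => Real.exp (lam1 σ σ₁ σ₂ r a' b' * t)) a b|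
        ≤ C * Real.exp (-c * r ^ (2*(σ-σ₁)) * t)
            * r ^ (2*(j:ℝ)*(σ₂-σ₁) + 2*(m:ℝ)*(σ-2*σ₁)) :=
  stmt4_general σ σ₁ σ₂ εs c₁ h12 hε hc₁ hpos hlam j m
end

section
/- Define G(r,a,b) = r^{2σ₁}(1 + a r^{2(σ₂-σ₁)}) Γ₂(r,a,b). Then for all j, m ∈ ℕ, |∂^{j+m}/(∂aʲ ∂bᵐ) G(r,a,b)^{-1}| ≤ C r^{-2σ₁+2j(σ₂-σ₁)+2m(σ-2σ₁)} uniformly on (0,ε*] × [0,1]², and at (a,b)=(0,0) this derivative equals C_{j,m} r^{-2σ₁+2j(σ₂-σ₁)+2m(σ-2σ₁)} for some constant C_{j,m}. -/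
open Real Set

/-! For `1 + aρ > 0`, with `ρ = r^{2(σ₂-σ₁)}` and `τ = r^{2(σ-2σ₁)}`, one has
`G = r^{2σ₁} √((1 + aρ)² - 4bτ)`, so `G⁻¹ = r^{-2σ₁} W` with `W = ((1 + aρ)² - 4bτ)^{-1/2}`.
The pair `V = (1 + aρ) W = Γ₂⁻¹` and `W` is closed under differentiation, each `∂_a` costing a
factor `ρ` and each `∂_b` a factor `τ`. Hence `∂_aʲ ∂_bᵐ G⁻¹ = r^{-2σ₁} ρʲ τᵐ P(V, W)` for one
polynomial `P` depending only on `j, m`. This gives the power of `r`; `P(V, W)` is bounded since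
`0 ≤ W ≤ V ≤ γ₀⁻¹`, and at `a = b = 0` it is the constant `P(1, 1)`. -/

open Filter Topology MvPolynomial

namespace MvPolynomial

theorem hasDerivAt_eval {σ 𝕜 : Type*} [Fintype σ] [NontriviallyNormedField 𝕜]
    (P : MvPolynomial σ 𝕜) {f : 𝕜 → σ → 𝕜} {f' : σ → 𝕜} {t : 𝕜} (hf : HasDerivAt f f' t) :
    HasDerivAt (fun s => eval (f s) P) (∑ i, eval (f t) (pderiv i P) * f' i) t := by
  classical
  induction P using MvPolynomial.induction_on with
  | C c => simpa using hasDerivAt_const t c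
  | add p q hp hq =>
    simp only [map_add, add_mul, Finset.sum_add_distrib]
    exact hp.add hq
  | mul_X p n hp =>
    simp only [map_mul, eval_X]
    refine (hp.fun_mul (hasDerivAt_pi.1 hf n)).congr_deriv ?_
    simp only [pderiv_mul, map_add, map_mul, eval_X, add_mul, Finset.sum_add_distrib]
    congr 1
    · rw [Finset.sum_mul]
      exact Finset.sum_congr rfl fun i _ => mul_right_comm _ _ _
    · simp [pderiv_X, Pi.single_apply]

theorem exists_bound_eval {σ 𝕜 : Type*} [Fintype σ] [NontriviallyNormedField 𝕜] [ProperSpace 𝕜]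
    (P : MvPolynomial σ 𝕜) (R : ℝ) : ∃ C, ∀ x : σ → 𝕜, ‖x‖ ≤ R → ‖eval x P‖ ≤ C := by
  obtain ⟨C, hC⟩ := (isCompact_closedBall (0 : σ → 𝕜) R).exists_bound_of_continuousOn
    (continuous_eval P).continuousOn
  exact ⟨C, fun x hx => hC x (mem_closedBall_zero_iff.2 hx)⟩

end MvPolynomial

theorem iteratedDeriv_const_mul_of_hasDerivAt_iterate {α 𝕜 : Type*} [NontriviallyNormedField 𝕜]
    {s : Set 𝕜} (hs : IsOpen s) {f : α → 𝕜 → 𝕜} {T : α → α} {c : 𝕜}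
    (hf : ∀ p, ∀ x ∈ s, HasDerivAt (f p) (c * f (T p) x) x) (k : 𝕜) (n : ℕ) (p : α) :
    ∀ x ∈ s, iteratedDeriv n (fun y => k * f p y) x = k * c ^ n * f (T^[n] p) x := by
  induction n with
  | zero => simp
  | succ n ih =>
    intro x hx
    have hloc : iteratedDeriv n (fun y => k * f p y) =ᶠ[𝓝 x] fun y => k * c ^ n * f (T^[n] p) y :=
      eventually_of_mem (hs.mem_nhds hx) ih
    rw [iteratedDeriv_succ, hloc.deriv_eq, ((hf _ x hx).const_mul (k * c ^ n)).deriv,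
      Function.iterate_succ_apply']
    ring

theorem pderiv2_congr {f g : ℝ → ℝ → ℝ} {a : ℝ} (h : ∀ᶠ a' in 𝓝 a, ∀ b', f a' b' = g a' b')
    (j m : ℕ) (b : ℝ) : pderiv2 j m f a b = pderiv2 j m g a b := by
  unfold pderiv2
  congr 1
  funext b'
  exact Filter.EventuallyEq.iteratedDeriv_eq j (h.mono fun a' h' => h' b')

namespace Gfun

variable (ρ τ : ℝ)

def discr (a b : ℝ) : ℝ := (1 + a * ρ) ^ 2 - 4 * b * τ

noncomputable def invRoot (a b : ℝ) : ℝ := (√(discr ρ τ a b))⁻¹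

noncomputable def rootCoords (a b : ℝ) : Fin 2 → ℝ :=
  ![(1 + a * ρ) * invRoot ρ τ a b, invRoot ρ τ a b]

/- `ρ⁻¹ ∂_a` and `τ⁻¹ ∂_b` on polynomials in `X 0 = V` and `X 1 = W`, from
`∂_a V = ρ (W - V² W)`, `∂_a W = -ρ V W²`, `∂_b V = 2τ V W²`, `∂_b W = 2τ W³`. -/
noncomputable def derivLeft (P : MvPolynomial (Fin 2) ℝ) : MvPolynomial (Fin 2) ℝ :=
  pderiv 0 P * (X 1 - X 0 ^ 2 * X 1) - pderiv 1 P * X 0 * X 1 ^ 2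

noncomputable def derivRight (P : MvPolynomial (Fin 2) ℝ) : MvPolynomial (Fin 2) ℝ :=
  2 * (pderiv 0 P * X 0 * X 1 ^ 2 + pderiv 1 P * X 1 ^ 3)

variable {ρ τ} {a b : ℝ}

theorem hasDerivAt_invRoot_left (hS : 0 < discr ρ τ a b) :
    HasDerivAt (fun a => invRoot ρ τ a b) (-(ρ * (1 + a * ρ) * invRoot ρ τ a b ^ 3)) a := by
  have hdiscr : HasDerivAt (fun a => discr ρ τ a b) (2 * (1 + a * ρ) * ρ) a := by
    simpa [discr] using (((hasDerivAt_id a).mul_const ρ).const_add 1).pow 2 |>.sub_const (4 * b * τ)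
  have hroot := (sqrt_pos.2 hS).ne'
  refine ((hdiscr.sqrt hS.ne').inv hroot).congr_deriv ?_
  simp only [invRoot]
  field_simp

theorem hasDerivAt_invRoot_right (hS : 0 < discr ρ τ a b) :
    HasDerivAt (fun b => invRoot ρ τ a b) (2 * τ * invRoot ρ τ a b ^ 3) b := by
  have hdiscr : HasDerivAt (fun b => discr ρ τ a b) (-(4 * τ)) b := by
    simpa [discr] using (((hasDerivAt_id b).const_mul 4).mul_const τ).const_sub ((1 + a * ρ) ^ 2)
  have hroot := (sqrt_pos.2 hS).ne'
  refine ((hdiscr.sqrt hS.ne').inv hroot).congr_deriv ?_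
  simp only [invRoot]
  field_simp
  ring

theorem hasDerivAt_eval_rootCoords_left (P : MvPolynomial (Fin 2) ℝ) (hS : 0 < discr ρ τ a b) :
    HasDerivAt (fun a => eval (rootCoords ρ τ a b) P)
      (ρ * eval (rootCoords ρ τ a b) (derivLeft P)) a := by
  have hW := hasDerivAt_invRoot_left hS
  have hU : HasDerivAt (fun a => 1 + a * ρ) ρ a := by
    simpa using ((hasDerivAt_id a).mul_const ρ).const_add 1
  have hcoords : HasDerivAt (fun a => rootCoords ρ τ a b)
      ![ρ * invRoot ρ τ a b + (1 + a * ρ) * -(ρ * (1 + a * ρ) * invRoot ρ τ a b ^ 3),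
        -(ρ * (1 + a * ρ) * invRoot ρ τ a b ^ 3)] a := by
    refine hasDerivAt_pi.2 (Fin.forall_fin_two.2 ⟨?_, ?_⟩)
    · simpa [rootCoords] using hU.fun_mul hW
    · simpa [rootCoords] using hW
  refine (MvPolynomial.hasDerivAt_eval P hcoords).congr_deriv ?_
  simp only [rootCoords, Fin.sum_univ_two, Matrix.cons_val_zero, Matrix.cons_val_one,
    Matrix.cons_val_fin_one, derivLeft, map_sub, map_mul, eval_X, map_pow]
  ring

theorem hasDerivAt_eval_rootCoords_right (P : MvPolynomial (Fin 2) ℝ) (hS : 0 < discr ρ τ a b) :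
    HasDerivAt (fun b => eval (rootCoords ρ τ a b) P)
      (τ * eval (rootCoords ρ τ a b) (derivRight P)) b := by
  have hW := hasDerivAt_invRoot_right hS
  have hcoords : HasDerivAt (fun b => rootCoords ρ τ a b)
      ![(1 + a * ρ) * (2 * τ * invRoot ρ τ a b ^ 3), 2 * τ * invRoot ρ τ a b ^ 3] b := by
    refine hasDerivAt_pi.2 (Fin.forall_fin_two.2 ⟨?_, ?_⟩)
    · simpa [rootCoords] using hW.const_mul (1 + a * ρ)
    · simpa [rootCoords] using hW
  refine (MvPolynomial.hasDerivAt_eval P hcoords).congr_deriv ?_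
  simp only [rootCoords, Fin.sum_univ_two, Matrix.cons_val_zero, Matrix.cons_val_one,
    Matrix.cons_val_fin_one, derivRight, map_mul, eval_ofNat, map_add, eval_X, map_pow]
  ring

theorem isOpen_discr_pos_left (b : ℝ) : IsOpen {a | 0 < discr ρ τ a b} :=
  isOpen_lt continuous_const (by unfold discr; fun_prop)

theorem isOpen_discr_pos_right (a : ℝ) : IsOpen {b | 0 < discr ρ τ a b} :=
  isOpen_lt continuous_const (by unfold discr; fun_prop)

theorem iteratedDeriv_eval_rootCoords_left (k : ℝ) (n : ℕ) (P : MvPolynomial (Fin 2) ℝ)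
    (hS : 0 < discr ρ τ a b) :
    iteratedDeriv n (fun a => k * eval (rootCoords ρ τ a b) P) a
      = k * ρ ^ n * eval (rootCoords ρ τ a b) (derivLeft^[n] P) :=
  iteratedDeriv_const_mul_of_hasDerivAt_iterate (isOpen_discr_pos_left b)
    (fun P _ ha => hasDerivAt_eval_rootCoords_left P ha) k n P a hS

theorem iteratedDeriv_eval_rootCoords_right (k : ℝ) (n : ℕ) (P : MvPolynomial (Fin 2) ℝ)
    (hS : 0 < discr ρ τ a b) :
    iteratedDeriv n (fun b => k * eval (rootCoords ρ τ a b) P) b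
      = k * τ ^ n * eval (rootCoords ρ τ a b) (derivRight^[n] P) :=
  iteratedDeriv_const_mul_of_hasDerivAt_iterate (isOpen_discr_pos_right a)
    (fun P _ hb => hasDerivAt_eval_rootCoords_right P hb) k n P b hS

theorem pderiv2_const_mul_invRoot (k : ℝ) (j m : ℕ) (hS : 0 < discr ρ τ a b) :
    pderiv2 j m (fun a b => k * invRoot ρ τ a b) a b
      = k * ρ ^ j * τ ^ m * eval (rootCoords ρ τ a b) (derivRight^[m] (derivLeft^[j] (X 1))) := by
  have hinv : ∀ a b, invRoot ρ τ a b = eval (rootCoords ρ τ a b) (X 1) := by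
    simp [rootCoords]
  have hinner : (fun b => iteratedDeriv j (fun a => k * invRoot ρ τ a b) a)
      =ᶠ[𝓝 b] fun b => k * ρ ^ j * eval (rootCoords ρ τ a b) (derivLeft^[j] (X 1)) := by
    filter_upwards [(isOpen_discr_pos_right a).mem_nhds hS] with b hb
    simp only [hinv]
    exact iteratedDeriv_eval_rootCoords_left k j _ hb
  rw [pderiv2, Filter.EventuallyEq.iteratedDeriv_eq m hinner,
    iteratedDeriv_eval_rootCoords_right _ _ _ hS]

theorem sqrt_discr_eq (hU : 0 < 1 + a * ρ) :
    √(discr ρ τ a b) = (1 + a * ρ) * √(1 - 4 * b * τ * ((1 + a * ρ)⁻¹) ^ 2) := by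
  rw [← sqrt_sq hU.le, ← sqrt_mul (sq_nonneg _), sqrt_sq hU.le, discr]
  congr 1
  field_simp

theorem discr_pos (hU : 0 < 1 + a * ρ) (hΓ : 0 < √(1 - 4 * b * τ * ((1 + a * ρ)⁻¹) ^ 2)) :
    0 < discr ρ τ a b := by
  rw [← sqrt_pos, sqrt_discr_eq hU]
  positivity

theorem norm_rootCoords_le {γ : ℝ} (hU : 1 ≤ 1 + a * ρ) (hγ : 0 < γ)
    (hΓ : γ ≤ √(1 - 4 * b * τ * ((1 + a * ρ)⁻¹) ^ 2)) : ‖rootCoords ρ τ a b‖ ≤ γ⁻¹ := by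
  set g := √(1 - 4 * b * τ * ((1 + a * ρ)⁻¹) ^ 2)
  have hg : 0 < g := hγ.trans_le hΓ
  have hW : invRoot ρ τ a b = ((1 + a * ρ) * g)⁻¹ := by
    rw [invRoot, sqrt_discr_eq (by linarith)]
  have hV : (1 + a * ρ) * invRoot ρ τ a b = g⁻¹ := by
    rw [hW]
    field_simp
  have hle : g⁻¹ ≤ γ⁻¹ := inv_anti₀ hγ hΓ
  refine (pi_norm_le_iff_of_nonneg (by positivity)).2 (Fin.forall_fin_two.2 ⟨?_, ?_⟩)
  · rwa [rootCoords, Matrix.cons_val_zero, hV, norm_inv, norm_of_nonneg hg.le]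
  · rw [rootCoords, Matrix.cons_val_one, Matrix.cons_val_zero, hW, norm_inv,
      norm_of_nonneg (by positivity)]
    exact (inv_anti₀ hg (le_mul_of_one_le_left hg.le hU)).trans hle

theorem rootCoords_zero : rootCoords ρ τ 0 0 = ![1, 1] := by
  simp [rootCoords, invRoot, discr]

end Gfun

open Gfun

theorem pderiv2_inv_Gfun {σ σ₁ σ₂ r a b : ℝ} (hr : 0 < r) (hU : 0 < 1 + a * r ^ (2*(σ₂-σ₁)))
    (hS : 0 < discr (r ^ (2*(σ₂-σ₁))) (r ^ (2*(σ-2*σ₁))) a b) (j m : ℕ) :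
    pderiv2 j m (fun a' b' => (Gfun σ σ₁ σ₂ r a' b')⁻¹) a b
      = r ^ (-(2*σ₁) + 2*(j:ℝ)*(σ₂-σ₁) + 2*(m:ℝ)*(σ-2*σ₁))
        * eval (rootCoords (r ^ (2*(σ₂-σ₁))) (r ^ (2*(σ-2*σ₁))) a b)
            (derivRight^[m] (derivLeft^[j] (X 1))) := by
  have hGfun : ∀ᶠ a' in 𝓝 a, ∀ b', (Gfun σ σ₁ σ₂ r a' b')⁻¹
      = (r ^ (2*σ₁))⁻¹ * invRoot (r ^ (2*(σ₂-σ₁))) (r ^ (2*(σ-2*σ₁))) a' b' := by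
    have hopen : IsOpen {a' : ℝ | 0 < 1 + a' * r ^ (2*(σ₂-σ₁))} :=
      isOpen_lt continuous_const (by fun_prop)
    filter_upwards [hopen.mem_nhds hU] with a' ha' b'
    rw [invRoot, sqrt_discr_eq ha', Gfun, Gamma2, Gamma1, mul_assoc, mul_inv]
  have hexp : (r ^ (2*σ₁))⁻¹ * (r ^ (2*(σ₂-σ₁))) ^ j * (r ^ (2*(σ-2*σ₁))) ^ m
      = r ^ (-(2*σ₁) + 2*(j:ℝ)*(σ₂-σ₁) + 2*(m:ℝ)*(σ-2*σ₁)) := by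
    rw [← rpow_neg hr.le, ← rpow_mul_natCast hr.le, ← rpow_mul_natCast hr.le,
      ← rpow_add hr, ← rpow_add hr]
    ring_nf
  rw [pderiv2_congr hGfun, pderiv2_const_mul_invRoot _ _ _ hS, hexp]

theorem stmt7_general (σ σ₁ σ₂ εs γ₀ : ℝ) (hγ₀ : 0 < γ₀)
    (hΓ : ∀ r ∈ Set.Ioc (0:ℝ) εs, ∀ a ∈ Set.Icc (0:ℝ) 1, ∀ b ∈ Set.Icc (0:ℝ) 1,
      γ₀ ≤ Gamma2 σ σ₁ σ₂ r a b)
    (j m : ℕ) :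
    (∃ C > 0, ∀ r ∈ Set.Ioc (0:ℝ) εs, ∀ a ∈ Set.Icc (0:ℝ) 1, ∀ b ∈ Set.Icc (0:ℝ) 1,
      |pderiv2 j m (fun a' b' => (Gfun σ σ₁ σ₂ r a' b')⁻¹) a b|
        ≤ C * r ^ (-(2*σ₁) + 2*(j:ℝ)*(σ₂-σ₁) + 2*(m:ℝ)*(σ-2*σ₁))) ∧
    (∃ Cjm : ℝ, ∀ r ∈ Set.Ioc (0:ℝ) εs,
      pderiv2 j m (fun a' b' => (Gfun σ σ₁ σ₂ r a' b')⁻¹) 0 0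
        = Cjm * r ^ (-(2*σ₁) + 2*(j:ℝ)*(σ₂-σ₁) + 2*(m:ℝ)*(σ-2*σ₁))) := by
  set P : MvPolynomial (Fin 2) ℝ := derivRight^[m] (derivLeft^[j] (X 1))
  obtain ⟨C, hC⟩ := P.exists_bound_eval γ₀⁻¹
  refine ⟨⟨max C 1, by positivity, fun r hr a ha b hb => ?_⟩, ⟨eval ![1, 1] P, fun r hr => ?_⟩⟩
  · have hU : 1 ≤ 1 + a * r ^ (2*(σ₂-σ₁)) :=
      le_add_of_nonneg_right (mul_nonneg ha.1 (rpow_nonneg hr.1.le _))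
    have hg := hΓ r hr a ha b hb
    rw [pderiv2_inv_Gfun hr.1 (by linarith) (discr_pos (by linarith) (hγ₀.trans_le hg)),
      abs_mul, abs_of_pos (rpow_pos_of_pos hr.1 _), mul_comm, ← norm_eq_abs]
    exact mul_le_mul_of_nonneg_right ((hC _ (norm_rootCoords_le hU hγ₀ hg)).trans
      (le_max_left _ _)) (rpow_nonneg hr.1.le _)
  · rw [pderiv2_inv_Gfun hr.1 (by simp) (by simp [discr]), rootCoords_zero, mul_comm]

theorem stmt7 (σ σ₁ σ₂ εs γ₀ : ℝ) (hσ : 1 ≤ σ) (hσ₁ : 0 ≤ σ₁) (h12 : σ₁ < σ / 2)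
    (h22 : σ / 2 < σ₂) (h2σ : σ₂ ≤ σ) (hε : 0 < εs) (hγ₀ : 0 < γ₀)
    (hΓ : ∀ r ∈ Set.Ioc (0:ℝ) εs, ∀ a ∈ Set.Icc (0:ℝ) 1, ∀ b ∈ Set.Icc (0:ℝ) 1,
      γ₀ ≤ Gamma2 σ σ₁ σ₂ r a b)
    (j m : ℕ) :
    (∃ C > 0, ∀ r ∈ Set.Ioc (0:ℝ) εs, ∀ a ∈ Set.Icc (0:ℝ) 1, ∀ b ∈ Set.Icc (0:ℝ) 1,
      |pderiv2 j m (fun a' b' => (Gfun σ σ₁ σ₂ r a' b')⁻¹) a b|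
        ≤ C * r ^ (-(2*σ₁) + 2*(j:ℝ)*(σ₂-σ₁) + 2*(m:ℝ)*(σ-2*σ₁))) ∧
    (∃ Cjm : ℝ, ∀ r ∈ Set.Ioc (0:ℝ) εs,
      pderiv2 j m (fun a' b' => (Gfun σ σ₁ σ₂ r a' b')⁻¹) 0 0
        = Cjm * r ^ (-(2*σ₁) + 2*(j:ℝ)*(σ₂-σ₁) + 2*(m:ℝ)*(σ-2*σ₁))) :=
  stmt7_general σ σ₁ σ₂ εs γ₀ hγ₀ hΓ j m
end

section
/- Let K̂₁¹(t,r,a,b) := G(r,a,b)^{-1} e^{λ₁⁰(r,a,b)t}. Then for all j, m ∈ ℕ, |∂^{j+m}/(∂aʲ ∂bᵐ) K̂₁¹(t,r,a,b)| ≤ C e^{-c r^{2(σ-σ₁)}t} r^{-2σ₁+2j(σ₂-σ₁)+2m(σ-2σ₁)} for all (r,a,b) ∈ (0,ε*] × [0,1]² and t > 0. Moreover, at (a,b)=(0,0), the derivative equals e^{-r^{2(σ-σ₁)}t} r^{-2σ₁+2j(σ₂-σ₁)+2m(σ-2σ₁)} · Σ_{h=0}^{j+m} C*_{h,j,m} (r^{2(σ-σ₁)}t)^h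 for constants C*_{h,j,m}. -/
open Real Set

noncomputable def K11 (σ σ₁ σ₂ t r a b : ℝ) : ℝ :=
  (Gfun σ σ₁ σ₂ r a b)⁻¹ * Real.exp (lam1 σ σ₁ σ₂ r a b * t)

/-! The derivatives of `K11` in `a` and `b` become, after the substitutions
`T = r^{2(σ-σ₁)} t`, `u = a r^{2(σ₂-σ₁)}`, `v = b r^{2(σ-2σ₁)}`, derivatives of the fixed function
`F(T,u,v) = (1+u)⁻¹ ρ^{-1/2} exp(-2T / ((1+u)(1+√ρ)))` with `ρ = 1 - 4v/(1+u)²`, each `∂_a` and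
`∂_b` contributing a factor `r^{2(σ₂-σ₁)}` resp. `r^{2(σ-2σ₁)}`. Every derivative of `F` is a finite
sum of terms `c vᵖ (1+u)^{-q} ρ^{-s/2} (1+√ρ)^{-e} Tʰ exp(-2T / ((1+u)(1+√ρ)))`, and differentiating
raises `h` by at most one. Where `ρ ≥ 1/4` and `u` is bounded, the exponential has rate bounded
below, so each term is `O(e^{-cT})` after absorbing `Tʰ`; at `u = v = 0` the exponential is `e^{-T}`
and each term is a multiple of `Tʰ e^{-T}`. -/

open Filter Topology

theorem iteratedDeriv_eq_pow_mul_iterate {α : Type*} {F : α → ℝ → ℝ} {D : α → α} {U : Set ℝ}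
    {c : ℝ} (hU : IsOpen U) (hF : ∀ i, ∀ x ∈ U, HasDerivAt (F i) (c * F (D i) x) x)
    (n : ℕ) (i : α) {x : ℝ} (hx : x ∈ U) :
    iteratedDeriv n (F i) x = c ^ n * F (D^[n] i) x := by
  induction n generalizing x with
  | zero => simp
  | succ n ih =>
    have hev : iteratedDeriv n (F i) =ᶠ[𝓝 x] fun y => c ^ n * F (D^[n] i) y :=
      eventually_of_mem (hU.mem_nhds hx) fun y hy => ih hy
    rw [iteratedDeriv_succ, hev.deriv_eq, ((hF _ x hx).const_mul (c ^ n)).deriv,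
      Function.iterate_succ_apply']
    ring

theorem HasDerivAt.pow_of_eq_mul_pow {f : ℝ → ℝ} {x k : ℝ} {d : ℕ}
    (hf : HasDerivAt f (k * f x ^ (d + 1)) x) (n : ℕ) :
    HasDerivAt (fun y => f y ^ n) (n * k * f x ^ (n + d)) x := by
  refine (hf.pow n).congr_deriv ?_
  cases n with
  | zero => simp
  | succ n => push_cast; ring

theorem pow_le_mul_exp {c T : ℝ} (hc : 0 < c) (hT : 0 ≤ T) (n : ℕ) :
    T ^ n ≤ c⁻¹ ^ n * n.factorial * exp (c * T) := by
  have h := Real.pow_div_factorial_le_exp (c * T) (by positivity) n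
  rw [div_le_iff₀ (by positivity), mul_pow] at h
  calc T ^ n = c⁻¹ ^ n * (c ^ n * T ^ n) := by
        rw [← mul_assoc, ← mul_pow, inv_mul_cancel₀ hc.ne', one_pow, one_mul]
    _ ≤ c⁻¹ ^ n * (exp (c * T) * n.factorial) := by gcongr
    _ = c⁻¹ ^ n * n.factorial * exp (c * T) := by ring

theorem rpow_inv_mul_pow_mul_pow {r : ℝ} (hr : 0 < r) (x y z : ℝ) (j m : ℕ) :
    (r ^ x)⁻¹ * (r ^ y) ^ j * (r ^ z) ^ m = r ^ (-x + j * y + m * z) := by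
  rw [← Real.rpow_mul_natCast hr.le, ← Real.rpow_mul_natCast hr.le, ← Real.rpow_neg hr.le,
    ← Real.rpow_add hr, ← Real.rpow_add hr]
  ring_nf

noncomputable def radicand (u v : ℝ) : ℝ := 1 - 4 * v * ((1 + u)⁻¹) ^ 2

def radicandDomain : Set (ℝ × ℝ) := {p | 0 < 1 + p.1 ∧ 0 < radicand p.1 p.2}

theorem isOpen_radicandDomain : IsOpen radicandDomain := by
  have hs : IsOpen {p : ℝ × ℝ | 0 < 1 + p.1} := isOpen_lt continuous_const (by fun_prop)
  have hc : ContinuousOn (fun p : ℝ × ℝ => radicand p.1 p.2) {p | 0 < 1 + p.1} := by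
    intro p hp
    have : ContinuousAt (fun p : ℝ × ℝ => radicand p.1 p.2) p := by
      unfold radicand
      exact continuousAt_const.sub ((continuousAt_const.mul continuousAt_snd).mul
        (((continuousAt_const.add continuousAt_fst).inv₀ (ne_of_gt hp)).pow 2))
    exact this.continuousWithinAt
  exact hc.isOpen_inter_preimage hs isOpen_Ioi

theorem hasDerivAt_inv_one_add {u : ℝ} (hu : 1 + u ≠ 0) :
    HasDerivAt (fun u => (1 + u)⁻¹) (-1 * ((1 + u)⁻¹) ^ (1 + 1)) u :=
  (((hasDerivAt_id u).const_add 1).inv hu).congr_deriv (by simp [div_eq_mul_inv])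

theorem hasDerivAt_sqrt_radicand_fst {u v : ℝ} (h : (u, v) ∈ radicandDomain) :
    HasDerivAt (fun u => √(radicand u v))
      (4 * v * ((1 + u)⁻¹) ^ 3 * (√(radicand u v))⁻¹) u := by
  have hρ : HasDerivAt (fun u => radicand u v) (8 * v * ((1 + u)⁻¹) ^ 3) u :=
    (((hasDerivAt_inv_one_add h.1.ne').pow 2).const_mul (4 * v)).const_sub 1
      |>.congr_deriv (by ring)
  exact (hρ.sqrt h.2.ne').congr_deriv (by rw [div_eq_mul_inv, mul_inv]; ring)

theorem hasDerivAt_sqrt_radicand_snd {u v : ℝ} (h : (u, v) ∈ radicandDomain) :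
    HasDerivAt (fun v => √(radicand u v)) (-2 * ((1 + u)⁻¹) ^ 2 * (√(radicand u v))⁻¹) v := by
  have hρ : HasDerivAt (fun v => radicand u v) (-4 * ((1 + u)⁻¹) ^ 2) v :=
    (((hasDerivAt_id v).const_mul 4).mul_const (((1 + u)⁻¹) ^ 2)).const_sub 1
      |>.congr_deriv (by simp)
  exact (hρ.sqrt h.2.ne').congr_deriv (by rw [div_eq_mul_inv, mul_inv]; ring)

theorem sqrt_radicand_mem_Icc {u v : ℝ} (hv : 0 ≤ v) (hρ : 1 / 4 ≤ radicand u v) :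
    √(radicand u v) ∈ Icc (1 / 2) 1 := by
  have hle : radicand u v ≤ 1 := by
    have : 0 ≤ 4 * v * ((1 + u)⁻¹) ^ 2 := by positivity
    rw [radicand]; linarith
  refine ⟨?_, Real.sqrt_le_one.mpr hle⟩
  rw [Real.le_sqrt (by norm_num) (by linarith)]
  linarith

theorem le_sq_of_quarter_le_radicand {u v : ℝ} (hu : 0 < 1 + u) (hρ : 1 / 4 ≤ radicand u v) :
    v ≤ (1 + u) ^ 2 := by
  have h1 : (1 + u) ^ 2 * ((1 + u)⁻¹) ^ 2 = 1 := by rw [← mul_pow, mul_inv_cancel₀ hu.ne', one_pow]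
  rw [radicand] at hρ
  nlinarith [sq_nonneg (1 + u)]

structure K11Term where
  c : ℝ
  p : ℕ
  q : ℕ
  s : ℕ
  e : ℕ
  tdeg : ℕ

namespace K11Term

noncomputable def eval (M : K11Term) (T u v : ℝ) : ℝ :=
  M.c * v ^ M.p * ((1 + u)⁻¹) ^ M.q * ((√(radicand u v))⁻¹) ^ M.s
    * ((1 + √(radicand u v))⁻¹) ^ M.e * T ^ M.tdeg
    * exp (-(2 * T) * (1 + u)⁻¹ * (1 + √(radicand u v))⁻¹)

-- Product rule, with `∂ᵤ(1+u)⁻¹ = -(1+u)⁻²` and `∂ᵤ√ρ = 4v(1+u)⁻³/√ρ`.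
def derivU (M : K11Term) : List K11Term :=
  [⟨M.c * (-(M.q : ℝ)), M.p, M.q + 1, M.s, M.e, M.tdeg⟩,
   ⟨M.c * (-(4 * (M.s : ℝ))), M.p + 1, M.q + 3, M.s + 2, M.e, M.tdeg⟩,
   ⟨M.c * (-(4 * (M.e : ℝ))), M.p + 1, M.q + 3, M.s + 1, M.e + 1, M.tdeg⟩,
   ⟨M.c * 2, M.p, M.q + 2, M.s, M.e + 1, M.tdeg + 1⟩,
   ⟨M.c * 8, M.p + 1, M.q + 4, M.s + 1, M.e + 2, M.tdeg + 1⟩]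

-- Product rule, with `∂ᵥ√ρ = -2(1+u)⁻²/√ρ`.
def derivV (M : K11Term) : List K11Term :=
  [⟨M.c * M.p, M.p - 1, M.q, M.s, M.e, M.tdeg⟩,
   ⟨M.c * (2 * (M.s : ℝ)), M.p, M.q + 2, M.s + 2, M.e, M.tdeg⟩,
   ⟨M.c * (2 * (M.e : ℝ)), M.p, M.q + 2, M.s + 1, M.e + 1, M.tdeg⟩,
   ⟨M.c * (-4), M.p, M.q + 3, M.s + 1, M.e + 2, M.tdeg + 1⟩]

noncomputable def sumEval (L : List K11Term) (T u v : ℝ) : ℝ := (L.map (·.eval T u v)).sum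

def sumDerivU (L : List K11Term) : List K11Term := L.flatMap derivU

def sumDerivV (L : List K11Term) : List K11Term := L.flatMap derivV

@[simp] theorem sumEval_nil (T u v : ℝ) : sumEval [] T u v = 0 := rfl

@[simp] theorem sumEval_cons (M : K11Term) (L : List K11Term) (T u v : ℝ) :
    sumEval (M :: L) T u v = M.eval T u v + sumEval L T u v := by
  simp [sumEval]

@[simp] theorem sumEval_append (L₁ L₂ : List K11Term) (T u v : ℝ) :
    sumEval (L₁ ++ L₂) T u v = sumEval L₁ T u v + sumEval L₂ T u v := by
  simp [sumEval]

theorem hasDerivAt_eval_fst (M : K11Term) {T u v : ℝ} (h : (u, v) ∈ radicandDomain) :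
    HasDerivAt (fun u => M.eval T u v) (sumEval M.derivU T u v) u := by
  have hW : 0 < √(radicand u v) := Real.sqrt_pos.mpr h.2
  have hS := hasDerivAt_sqrt_radicand_fst h
  have hX := hasDerivAt_inv_one_add h.1.ne'
  have hWi : HasDerivAt (fun u => (√(radicand u v))⁻¹)
      (-(4 * v * ((1 + u)⁻¹) ^ 3) * ((√(radicand u v))⁻¹) ^ (2 + 1)) u :=
    (hS.inv hW.ne').congr_deriv (by rw [div_eq_mul_inv, ← inv_pow]; ring)
  have hB : HasDerivAt (fun u => (1 + √(radicand u v))⁻¹)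
      (-(4 * v * ((1 + u)⁻¹) ^ 3 * (√(radicand u v))⁻¹) * ((1 + √(radicand u v))⁻¹) ^ (1 + 1)) u :=
    ((hS.const_add 1).inv (by positivity)).congr_deriv (by rw [div_eq_mul_inv, ← inv_pow])
  have hE := ((hX.const_mul (-(2 * T))).mul hB).exp
  refine ((((((hX.pow_of_eq_mul_pow M.q).const_mul (M.c * v ^ M.p)).mul
    (hWi.pow_of_eq_mul_pow M.s)).mul (hB.pow_of_eq_mul_pow M.e)).mul_const
    (T ^ M.tdeg)).mul hE).congr_deriv ?_
  simp only [sumEval, derivU, eval, List.map_cons, List.map_nil, List.sum_cons, List.sum_nil,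
    Pi.mul_apply]
  ring

theorem hasDerivAt_eval_snd (M : K11Term) {T u v : ℝ} (h : (u, v) ∈ radicandDomain) :
    HasDerivAt (fun v => M.eval T u v) (sumEval M.derivV T u v) v := by
  have hW : 0 < √(radicand u v) := Real.sqrt_pos.mpr h.2
  have hS := hasDerivAt_sqrt_radicand_snd h
  have hWi : HasDerivAt (fun v => (√(radicand u v))⁻¹)
      (2 * ((1 + u)⁻¹) ^ 2 * ((√(radicand u v))⁻¹) ^ (2 + 1)) v :=
    (hS.inv hW.ne').congr_deriv (by rw [div_eq_mul_inv, ← inv_pow]; ring)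
  have hB : HasDerivAt (fun v => (1 + √(radicand u v))⁻¹)
      (2 * ((1 + u)⁻¹) ^ 2 * (√(radicand u v))⁻¹ * ((1 + √(radicand u v))⁻¹) ^ (1 + 1)) v :=
    ((hS.const_add 1).inv (by positivity)).congr_deriv (by rw [div_eq_mul_inv, ← inv_pow]; ring)
  have hE := (hB.const_mul (-(2 * T) * (1 + u)⁻¹)).exp
  refine ((((((hasDerivAt_pow M.p v).const_mul M.c).mul_const (((1 + u)⁻¹) ^ M.q)).mul
    (hWi.pow_of_eq_mul_pow M.s)).mul (hB.pow_of_eq_mul_pow M.e)).mul_const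
    (T ^ M.tdeg) |>.mul hE).congr_deriv ?_
  simp only [sumEval, derivV, eval, List.map_cons, List.map_nil, List.sum_cons, List.sum_nil,
    Pi.mul_apply]
  ring

theorem hasDerivAt_sumEval_fst (L : List K11Term) {T u v : ℝ} (h : (u, v) ∈ radicandDomain) :
    HasDerivAt (fun u => sumEval L T u v) (sumEval (sumDerivU L) T u v) u := by
  induction L with
  | nil => simpa [sumDerivU] using hasDerivAt_const u (0 : ℝ)
  | cons M L ih => simpa [sumDerivU] using (M.hasDerivAt_eval_fst h).fun_add ih

theorem hasDerivAt_sumEval_snd (L : List K11Term) {T u v : ℝ} (h : (u, v) ∈ radicandDomain) :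
    HasDerivAt (fun v => sumEval L T u v) (sumEval (sumDerivV L) T u v) v := by
  induction L with
  | nil => simpa [sumDerivV] using hasDerivAt_const v (0 : ℝ)
  | cons M L ih => simpa [sumDerivV] using (M.hasDerivAt_eval_snd h).fun_add ih

theorem iteratedDeriv_sumEval_fst (n : ℕ) (L : List K11Term) {κ T R w a : ℝ}
    (h : (a * R, w) ∈ radicandDomain) :
    iteratedDeriv n (fun a => κ * sumEval L T (a * R) w) a
      = R ^ n * (κ * sumEval (sumDerivU^[n] L) T (a * R) w) := by
  refine iteratedDeriv_eq_pow_mul_iterate (F := fun L a => κ * sumEval L T (a * R) w)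
    (D := sumDerivU) (c := R)
    (isOpen_radicandDomain.preimage (f := fun a => (a * R, w)) (by fun_prop))
    (fun L x hx => ?_) n L h
  have hd : HasDerivAt (fun a => κ * sumEval L T (a * R) w)
      (κ * (sumEval (sumDerivU L) T (x * R) w * R)) x := by
    have := ((hasDerivAt_sumEval_fst L (T := T) hx).comp x (hasDerivAt_mul_const R)).const_mul κ
    exact this
  exact hd.congr_deriv (by ring)

theorem iteratedDeriv_sumEval_snd (n : ℕ) (L : List K11Term) {κ T S u b : ℝ}
    (h : (u, b * S) ∈ radicandDomain) :
    iteratedDeriv n (fun b => κ * sumEval L T u (b * S)) b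
      = S ^ n * (κ * sumEval (sumDerivV^[n] L) T u (b * S)) := by
  refine iteratedDeriv_eq_pow_mul_iterate (F := fun L b => κ * sumEval L T u (b * S))
    (D := sumDerivV) (c := S)
    (isOpen_radicandDomain.preimage (f := fun b => (u, b * S)) (by fun_prop))
    (fun L x hx => ?_) n L h
  have hd : HasDerivAt (fun b => κ * sumEval L T u (b * S))
      (κ * (sumEval (sumDerivV L) T u (x * S) * S)) x := by
    have := ((hasDerivAt_sumEval_snd L (T := T) hx).comp x (hasDerivAt_mul_const S)).const_mul κ
    exact this
  exact hd.congr_deriv (by ring)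

def kernel : K11Term := ⟨1, 0, 1, 1, 0, 0⟩

theorem Gamma2_eq_sqrt_radicand (σ σ₁ σ₂ r a b : ℝ) :
    Gamma2 σ σ₁ σ₂ r a b = √(radicand (a * r ^ (2*(σ₂-σ₁))) (b * r ^ (2*(σ-2*σ₁)))) := by
  rw [Gamma2, radicand, Gamma1]
  ring_nf

theorem K11_eq_kernel_eval (σ σ₁ σ₂ t r a b : ℝ) :
    K11 σ σ₁ σ₂ t r a b = (r ^ (2*σ₁))⁻¹ *
      kernel.eval (r ^ (2*(σ-σ₁)) * t) (a * r ^ (2*(σ₂-σ₁))) (b * r ^ (2*(σ-2*σ₁))) := by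
  simp only [K11, Gfun, lam1, Gamma1, eval, kernel, ← Gamma2_eq_sqrt_radicand, mul_inv]
  ring_nf

theorem pderiv2_K11_eq (j m : ℕ) {σ σ₁ σ₂ t r a b : ℝ} (hr : 0 < r)
    (h : (a * r ^ (2*(σ₂-σ₁)), b * r ^ (2*(σ-2*σ₁))) ∈ radicandDomain) :
    pderiv2 j m (fun a' b' => K11 σ σ₁ σ₂ t r a' b') a b
      = r ^ (-(2*σ₁) + 2*(j:ℝ)*(σ₂-σ₁) + 2*(m:ℝ)*(σ-2*σ₁))
        * sumEval (sumDerivV^[m] (sumDerivU^[j] [kernel])) (r ^ (2*(σ-σ₁)) * t)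
            (a * r ^ (2*(σ₂-σ₁))) (b * r ^ (2*(σ-2*σ₁))) := by
  set R := r ^ (2*(σ₂-σ₁))
  set S := r ^ (2*(σ-2*σ₁))
  set T := r ^ (2*(σ-σ₁)) * t
  have hK : ∀ a' b',
      K11 σ σ₁ σ₂ t r a' b' = (r ^ (2*σ₁))⁻¹ * sumEval [kernel] T (a' * R) (b' * S) :=
    fun a' b' => by simp [K11_eq_kernel_eval, sumEval, T, R, S]
  have hinner : (fun b' => iteratedDeriv j (fun a' => K11 σ σ₁ σ₂ t r a' b') a)
      =ᶠ[𝓝 b] fun b' =>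
        R ^ j * (r ^ (2*σ₁))⁻¹ * sumEval (sumDerivU^[j] [kernel]) T (a * R) (b' * S) := by
    have hU := isOpen_radicandDomain.preimage (f := fun b' => (a * R, b' * S)) (by fun_prop)
    filter_upwards [hU.mem_nhds h] with b' hb'
    simp only [hK, iteratedDeriv_sumEval_fst j _ hb', mul_assoc]
  have hscale : r ^ (-(2*σ₁) + 2*(j:ℝ)*(σ₂-σ₁) + 2*(m:ℝ)*(σ-2*σ₁))
      = (r ^ (2*σ₁))⁻¹ * R ^ j * S ^ m := by
    rw [rpow_inv_mul_pow_mul_pow hr]; ring_nf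
  rw [pderiv2, hinner.iteratedDeriv_eq, iteratedDeriv_sumEval_snd m _ h, hscale]
  ring

noncomputable def bound (R₀ : ℝ) (M : K11Term) : ℝ :=
  |M.c| * ((1 + R₀) ^ 2) ^ M.p * 2 ^ M.s * ((2 * (1 + R₀)) ^ M.tdeg * M.tdeg.factorial)

theorem abs_eval_le (M : K11Term) {R₀ T u v : ℝ} (hT : 0 < T) (hu : 0 ≤ u) (huR : u ≤ R₀)
    (hv : 0 ≤ v) (hρ : 1 / 4 ≤ radicand u v) :
    |M.eval T u v| ≤ M.bound R₀ * exp (-((1 + R₀)⁻¹ / 2) * T) := by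
  rw [eval]
  obtain ⟨hW, hW1⟩ := sqrt_radicand_mem_Icc hv hρ
  set W := √(radicand u v)
  have hR : 0 < 1 + R₀ := by linarith
  have hvR : v ≤ (1 + R₀) ^ 2 :=
    (le_sq_of_quarter_le_radicand (by linarith) hρ).trans (by gcongr)
  have hX : (1 + R₀)⁻¹ ≤ (1 + u)⁻¹ := inv_anti₀ (by linarith) (by linarith)
  have hX1 : (1 + u)⁻¹ ≤ 1 := inv_le_one_of_one_le₀ (by linarith)
  have hWi : W⁻¹ ≤ 2 := by simpa using inv_anti₀ (by norm_num) hW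
  have hB : 1 / 2 ≤ (1 + W)⁻¹ := by rw [one_div]; exact inv_anti₀ (by linarith) (by linarith)
  have hB1 : (1 + W)⁻¹ ≤ 1 := inv_le_one_of_one_le₀ (by linarith)
  have hrate : -(2 * T) * (1 + u)⁻¹ * (1 + W)⁻¹ ≤ -(2 * ((1 + R₀)⁻¹ / 2)) * T := by
    have : (1 + R₀)⁻¹ * (1 / 2) ≤ (1 + u)⁻¹ * (1 + W)⁻¹ := by gcongr
    nlinarith
  have hTpow := pow_le_mul_exp (half_pos (inv_pos.mpr hR)) hT.le M.tdeg
  rw [inv_div, div_inv_eq_mul] at hTpow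
  calc |M.c * v ^ M.p * ((1 + u)⁻¹) ^ M.q * (W⁻¹) ^ M.s * ((1 + W)⁻¹) ^ M.e * T ^ M.tdeg
        * exp (-(2 * T) * (1 + u)⁻¹ * (1 + W)⁻¹)|
      = |M.c| * v ^ M.p * ((1 + u)⁻¹) ^ M.q * (W⁻¹) ^ M.s * ((1 + W)⁻¹) ^ M.e * T ^ M.tdeg
          * exp (-(2 * T) * (1 + u)⁻¹ * (1 + W)⁻¹) := by
        simp only [abs_mul, abs_pow, abs_inv, Real.abs_exp, abs_of_nonneg hv, abs_of_pos hT,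
          abs_of_pos (by linarith : 0 < 1 + u), abs_of_pos (by linarith : 0 < W),
          abs_of_pos (by linarith : 0 < 1 + W)]
    _ ≤ |M.c| * ((1 + R₀) ^ 2) ^ M.p * 1 ^ M.q * 2 ^ M.s * 1 ^ M.e
          * ((2 * (1 + R₀)) ^ M.tdeg * M.tdeg.factorial * exp ((1 + R₀)⁻¹ / 2 * T))
          * exp (-(2 * ((1 + R₀)⁻¹ / 2)) * T) := by
        gcongr
    _ = M.bound R₀ * exp (-((1 + R₀)⁻¹ / 2) * T) := by
        have hexp : exp ((1 + R₀)⁻¹ / 2 * T) * exp (-(2 * ((1 + R₀)⁻¹ / 2)) * T)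
            = exp (-((1 + R₀)⁻¹ / 2) * T) := by
          rw [← Real.exp_add]; ring_nf
        rw [bound, ← hexp]
        ring

noncomputable def sumBound (R₀ : ℝ) (L : List K11Term) : ℝ := (L.map (bound R₀)).sum

theorem abs_sumEval_le (L : List K11Term) {R₀ T u v : ℝ} (hT : 0 < T) (hu : 0 ≤ u)
    (huR : u ≤ R₀) (hv : 0 ≤ v) (hρ : 1 / 4 ≤ radicand u v) :
    |sumEval L T u v| ≤ sumBound R₀ L * exp (-((1 + R₀)⁻¹ / 2) * T) := by
  induction L with
  | nil => simp [sumBound]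
  | cons M L ih =>
    calc |sumEval (M :: L) T u v| ≤ |M.eval T u v| + |sumEval L T u v| := by
          rw [sumEval_cons]; exact abs_add_le _ _
      _ ≤ M.bound R₀ * exp (-((1 + R₀)⁻¹ / 2) * T) + sumBound R₀ L * exp (-((1 + R₀)⁻¹ / 2) * T) :=
          add_le_add (M.abs_eval_le hT hu huR hv hρ) ih
      _ = sumBound R₀ (M :: L) * exp (-((1 + R₀)⁻¹ / 2) * T) := by simp [sumBound]; ring

noncomputable def valueAtZero (M : K11Term) : ℝ := M.c * 0 ^ M.p * 2⁻¹ ^ M.e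

theorem eval_zero_zero (M : K11Term) (T : ℝ) :
    M.eval T 0 0 = M.valueAtZero * T ^ M.tdeg * exp (-T) := by
  have h1 : radicand 0 0 = 1 := by norm_num [radicand]
  rw [eval, valueAtZero, h1, Real.sqrt_one]
  ring_nf

noncomputable def coeffAtZero (L : List K11Term) (h : ℕ) : ℝ :=
  (L.map fun M => if M.tdeg = h then M.valueAtZero else 0).sum

theorem sumEval_zero_zero (L : List K11Term) {n : ℕ} (hL : ∀ M ∈ L, M.tdeg < n) (T : ℝ) :
    sumEval L T 0 0 = exp (-T) * ∑ h ∈ Finset.range n, coeffAtZero L h * T ^ h := by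
  induction L with
  | nil => simp [coeffAtZero]
  | cons M L ih =>
    have hM : M.tdeg ∈ Finset.range n := Finset.mem_range.mpr (hL M List.mem_cons_self)
    rw [sumEval_cons, eval_zero_zero, ih fun M' hM' => hL M' (List.mem_cons_of_mem _ hM')]
    simp only [coeffAtZero, List.map_cons, List.sum_cons, add_mul, Finset.sum_add_distrib,
      ite_mul, zero_mul, Finset.sum_ite_eq, hM, if_true]
    ring

theorem tdeg_le_of_mem_derivU (M : K11Term) : ∀ M' ∈ M.derivU, M'.tdeg ≤ M.tdeg + 1 := by
  simp [derivU]

theorem tdeg_le_of_mem_derivV (M : K11Term) : ∀ M' ∈ M.derivV, M'.tdeg ≤ M.tdeg + 1 := by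
  simp [derivV]

theorem tdeg_le_of_mem_flatMap_iterate {D : K11Term → List K11Term}
    (hD : ∀ M, ∀ M' ∈ D M, M'.tdeg ≤ M.tdeg + 1) (k : ℕ) {n : ℕ} {L : List K11Term}
    (hL : ∀ M ∈ L, M.tdeg ≤ n) : ∀ M ∈ (fun L => L.flatMap D)^[k] L, M.tdeg ≤ n + k := by
  induction k generalizing n L with
  | zero => simpa using hL
  | succ k ih =>
    rw [Function.iterate_succ_apply]
    intro M hM
    have := ih (n := n + 1) (fun M' hM' => ?_) M hM
    · omega
    obtain ⟨M₀, hM₀, hM'⟩ := List.mem_flatMap.mp hM'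
    exact (hD M₀ M' hM').trans (by simpa using hL M₀ hM₀)

theorem tdeg_lt_of_mem_iterate {j m : ℕ} :
    ∀ M ∈ sumDerivV^[m] (sumDerivU^[j] [kernel]), M.tdeg < j + m + 1 := fun M hM => by
  have := tdeg_le_of_mem_flatMap_iterate tdeg_le_of_mem_derivV m
    (tdeg_le_of_mem_flatMap_iterate tdeg_le_of_mem_derivU j (n := 0) (by simp [kernel])) M hM
  omega

theorem abs_pderiv2_K11_le (j m : ℕ) {σ σ₁ σ₂ t r a b R₀ : ℝ} (ht : 0 < t) (hr : 0 < r)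
    (ha : 0 ≤ a) (hb : 0 ≤ b) (huR : a * r ^ (2*(σ₂-σ₁)) ≤ R₀)
    (hΓ : 1 / 2 ≤ Gamma2 σ σ₁ σ₂ r a b) :
    |pderiv2 j m (fun a' b' => K11 σ σ₁ σ₂ t r a' b') a b|
      ≤ sumBound R₀ (sumDerivV^[m] (sumDerivU^[j] [kernel]))
          * exp (-((1 + R₀)⁻¹ / 2) * r ^ (2*(σ-σ₁)) * t)
          * r ^ (-(2*σ₁) + 2*(j:ℝ)*(σ₂-σ₁) + 2*(m:ℝ)*(σ-2*σ₁)) := by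
  rw [Gamma2_eq_sqrt_radicand, Real.le_sqrt' (by norm_num)] at hΓ
  have hρ : 1 / 4 ≤ radicand (a * r ^ (2*(σ₂-σ₁))) (b * r ^ (2*(σ-2*σ₁))) := by linarith
  rw [pderiv2_K11_eq j m hr ⟨by positivity, by linarith⟩, abs_mul,
    abs_of_pos (by positivity), mul_comm]
  refine mul_le_mul_of_nonneg_right ?_ (by positivity)
  rw [mul_assoc _ _ t]
  exact abs_sumEval_le _ (by positivity) (by positivity) huR (by positivity) hρ

end K11Term

open K11Term

theorem stmt8_general (σ σ₁ σ₂ εs : ℝ) (h12 : σ₁ < σ / 2)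
    (h22 : σ / 2 < σ₂)
    (hΓ : ∀ r ∈ Set.Ioc (0:ℝ) εs, ∀ a ∈ Set.Icc (0:ℝ) 1, ∀ b ∈ Set.Icc (0:ℝ) 1,
      (1:ℝ)/2 ≤ Gamma2 σ σ₁ σ₂ r a b)
    (j m : ℕ) :
    (∃ C > 0, ∃ c > 0, ∀ t > 0, ∀ r ∈ Set.Ioc (0:ℝ) εs, ∀ a ∈ Set.Icc (0:ℝ) 1,
      ∀ b ∈ Set.Icc (0:ℝ) 1,
      |pderiv2 j m (fun a' b' => K11 σ σ₁ σ₂ t r a' b') a b|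
        ≤ C * Real.exp (-c * r ^ (2*(σ-σ₁)) * t)
            * r ^ (-(2*σ₁) + 2*(j:ℝ)*(σ₂-σ₁) + 2*(m:ℝ)*(σ-2*σ₁))) ∧
    (∃ Cs : ℕ → ℝ, ∀ r ∈ Set.Ioc (0:ℝ) εs, ∀ t > (0:ℝ),
      pderiv2 j m (fun a' b' => K11 σ σ₁ σ₂ t r a' b') 0 0
        = Real.exp (-(r ^ (2*(σ-σ₁))) * t)
            * r ^ (-(2*σ₁) + 2*(j:ℝ)*(σ₂-σ₁) + 2*(m:ℝ)*(σ-2*σ₁))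
            * ∑ h ∈ Finset.range (j+m+1), Cs h * (r ^ (2*(σ-σ₁)) * t) ^ h) := by
  set L := sumDerivV^[m] (sumDerivU^[j] [kernel])
  refine ⟨?_, ⟨coeffAtZero L, fun r hr t ht => ?_⟩⟩
  · set R₀ := |εs| ^ (2*(σ₂-σ₁))
    refine ⟨max (sumBound R₀ L) 1, lt_max_of_lt_right one_pos, (1 + R₀)⁻¹ / 2, by positivity, ?_⟩
    rintro t ht r ⟨hr, hrε⟩ a ⟨ha, ha1⟩ b ⟨hb, hb1⟩
    have huR : a * r ^ (2*(σ₂-σ₁)) ≤ R₀ := by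
      have : r ^ (2*(σ₂-σ₁)) ≤ R₀ :=
        Real.rpow_le_rpow hr.le (hrε.trans (le_abs_self εs)) (by linarith)
      nlinarith [Real.rpow_nonneg hr.le (2*(σ₂-σ₁))]
    have hΓr := hΓ r ⟨hr, hrε⟩ a ⟨ha, ha1⟩ b ⟨hb, hb1⟩
    refine (abs_pderiv2_K11_le j m ht hr ha hb huR hΓr).trans ?_
    gcongr
    exact le_max_left _ _
  · rw [pderiv2_K11_eq j m hr.1 (by norm_num [radicandDomain, radicand]), zero_mul,
      zero_mul, sumEval_zero_zero L tdeg_lt_of_mem_iterate]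
    ring_nf

theorem stmt8 (σ σ₁ σ₂ εs : ℝ) (hσ : 1 ≤ σ) (hσ₁ : 0 ≤ σ₁) (h12 : σ₁ < σ / 2)
    (h22 : σ / 2 < σ₂) (h2σ : σ₂ ≤ σ) (hε : 0 < εs)
    (hΓ : ∀ r ∈ Set.Ioc (0:ℝ) εs, ∀ a ∈ Set.Icc (0:ℝ) 1, ∀ b ∈ Set.Icc (0:ℝ) 1,
      (1:ℝ)/2 ≤ Gamma2 σ σ₁ σ₂ r a b)
    (j m : ℕ) :
    (∃ C > 0, ∃ c > 0, ∀ t > 0, ∀ r ∈ Set.Ioc (0:ℝ) εs, ∀ a ∈ Set.Icc (0:ℝ) 1,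
      ∀ b ∈ Set.Icc (0:ℝ) 1,
      |pderiv2 j m (fun a' b' => K11 σ σ₁ σ₂ t r a' b') a b|
        ≤ C * Real.exp (-c * r ^ (2*(σ-σ₁)) * t)
            * r ^ (-(2*σ₁) + 2*(j:ℝ)*(σ₂-σ₁) + 2*(m:ℝ)*(σ-2*σ₁))) ∧
    (∃ Cs : ℕ → ℝ, ∀ r ∈ Set.Ioc (0:ℝ) εs, ∀ t > (0:ℝ),
      pderiv2 j m (fun a' b' => K11 σ σ₁ σ₂ t r a' b') 0 0
        = Real.exp (-(r ^ (2*(σ-σ₁))) * t)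
            * r ^ (-(2*σ₁) + 2*(j:ℝ)*(σ₂-σ₁) + 2*(m:ℝ)*(σ-2*σ₁))
            * ∑ h ∈ Finset.range (j+m+1), Cs h * (r ^ (2*(σ-σ₁)) * t) ^ h) :=
  stmt8_general σ σ₁ σ₂ εs h12 h22 hΓ j m
end
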